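/- arXiv:2402.14775 — 7 statements merged into one kernel-verified Lean document; each statement's English description precedes it below -/
import Mathlib

section
/- A DAG G satisfies the V-OUS and collider-stable orientation rule with respect to P if and only if sk(P) = sk(G) and P is V-OUS and collider-stable with respect to G. -/
open MeasureTheory ProbabilityTheory

/-- A directed acyclic graph on vertex set `V`: a directed edge relation with no
directed cycles (a directed path from a node to itself). -/
structure DAG (V : Type*) where
  Edge : V → V → Prop
  acyclic : ∀ i, ¬ Relation.TransGen Edge i i

namespace DAG

variable {V : Type*}

/-- `i` and `j` are adjacent if there is a directed edge between them in either direction. -/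
def Adj (G : DAG V) (i j : V) : Prop := G.Edge i j ∨ G.Edge j i

/-- `an_G(C)`: the set of nodes not in `C` with a directed path to some node of `C`. -/
def ancestors (G : DAG V) (C : Set V) : Set V :=
  {i | i ∉ C ∧ ∃ j ∈ C, Relation.TransGen G.Edge i j}

/-- A path between `a` and `b` in (the skeleton of) a DAG `G`: a sequence of at least two
distinct vertices starting at `a`, ending at `b`, with consecutive vertices adjacent. -/
structure Path (G : DAG V) (a b : V) where
  n : ℕ
  npos : 0 < n
  f : Fin (n + 1) → V
  first : f 0 = a
  last : f (Fin.last n) = b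
  adj : ∀ i : Fin n, G.Adj (f i.castSucc) (f i.succ)
  inj : Function.Injective f

/-- The intermediate node at position `t` of the path is a collider on the path:
both incident edges of the path point into it. -/
def Path.ColliderAt {G : DAG V} {a b : V} (π : Path G a b) (t : ℕ)
    (h1 : 0 < t) (h2 : t < π.n) : Prop :=
  G.Edge (π.f ⟨t - 1, by omega⟩) (π.f ⟨t, by omega⟩) ∧
  G.Edge (π.f ⟨t + 1, by omega⟩) (π.f ⟨t, by omega⟩)

/-- A path is blocked by `C` if some intermediate non-collider on the path lies in `C`,
or some collider `m` on the path satisfies `m ∉ C ∪ an_G(C)`. -/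
def Path.Blocked {G : DAG V} {a b : V} (π : Path G a b) (C : Set V) : Prop :=
  ∃ (t : ℕ) (h1 : 0 < t) (h2 : t < π.n),
    (¬ π.ColliderAt t h1 h2 ∧ π.f ⟨t, by omega⟩ ∈ C) ∨
    (π.ColliderAt t h1 h2 ∧ π.f ⟨t, by omega⟩ ∉ C ∪ G.ancestors C)

/-- d-separation: every path between a node of `A` and a node of `B` is blocked by `C`. -/
def dSep (G : DAG V) (A B C : Set V) : Prop :=
  ∀ a ∈ A, ∀ b ∈ B, ∀ π : Path G a b, π.Blocked C

/-- Two DAGs are Markov equivalent if they have exactly the same d-separations. -/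
def MarkovEquiv (G₁ G₂ : DAG V) : Prop :=
  ∀ A B C : Set V, Disjoint A B → Disjoint A C → Disjoint B C →
    (G₁.dSep A B C ↔ G₂.dSep A B C)

/-- A v-configuration `i ∼ k ∼ j` in the DAG: `i, k, j` distinct, `i` and `j` each
adjacent to `k`, but `i` and `j` not adjacent. -/
def VConfig (G : DAG V) (i k j : V) : Prop :=
  i ≠ j ∧ i ≠ k ∧ j ≠ k ∧ G.Adj i k ∧ G.Adj j k ∧ ¬ G.Adj i j

/-- A collider v-configuration `i → k ← j`. -/
def IsCollider (G : DAG V) (i k j : V) : Prop :=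
  G.VConfig i k j ∧ G.Edge i k ∧ G.Edge j k

/-- A non-collider v-configuration. -/
def IsNonCollider (G : DAG V) (i k j : V) : Prop :=
  G.VConfig i k j ∧ ¬ (G.Edge i k ∧ G.Edge j k)

end DAG

/-- A v-configuration `i ∼ k ∼ j` in an undirected graph given by an adjacency relation. -/
def VConfigRel {V : Type*} (A : V → V → Prop) (i k j : V) : Prop :=
  i ≠ j ∧ i ≠ k ∧ j ≠ k ∧ A i k ∧ A j k ∧ ¬ A i j

section Prob

variable {V : Type*} {Ω : Type*} [MeasurableSpace Ω] [StandardBorelSpace Ω] [Nonempty Ω]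
  {E : V → Type*} [∀ i, MeasurableSpace (E i)]

/-- `A ⫫ B | C`: the families `(X i)_{i ∈ A}` and `(X j)_{j ∈ B}` are conditionally
independent given the σ-algebra generated by `(X k)_{k ∈ C}`, under `μ`. -/
def CI (μ : Measure Ω) [IsFiniteMeasure μ] (X : ∀ i, Ω → E i)
    (hX : ∀ i, Measurable (X i)) (A B C : Set V) : Prop :=
  CondIndepFun (MeasurableSpace.comap (fun ω => fun k : C => X k.1 ω) inferInstance)
    ((measurable_pi_iff.mpr fun k : C => hX k.1).comap_le)
    (fun ω => fun i : A => X i.1 ω) (fun ω => fun j : B => X j.1 ω) μ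

variable (μ : Measure Ω) [IsFiniteMeasure μ] (X : ∀ i, Ω → E i) (hX : ∀ i, Measurable (X i))

/-- The skeleton of `P`: distinct `i, j` are adjacent iff no `C ⊆ V \ {i,j}` renders
`{i} ⫫ {j} | C`. -/
def SkP (i j : V) : Prop :=
  i ≠ j ∧ ¬ ∃ C : Set V, C ⊆ ({i, j} : Set V)ᶜ ∧ CI μ X hX {i} {j} C

/-- `P` is Markovian to `G`: every d-separation implies the corresponding
conditional independence. -/
def MarkovTo (G : DAG V) : Prop :=
  ∀ A B C : Set V, Disjoint A B → Disjoint A C → Disjoint B C →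
    G.dSep A B C → CI μ X hX A B C

/-- Adjacency faithfulness: adjacent nodes of `G` are separated by no conditioning set. -/
def AdjFaithful (G : DAG V) : Prop :=
  ∀ i j : V, G.Adj i j → ¬ ∃ C : Set V, C ⊆ ({i, j} : Set V)ᶜ ∧ CI μ X hX {i} {j} C

/-- `sk(P) = sk(G)`. -/
def SkelEq (G : DAG V) : Prop :=
  ∀ i j : V, G.Adj i j ↔ SkP μ X hX i j

/-- V-ordered upward stability wrt `G`. -/
def VOUS (G : DAG V) : Prop :=
  ∀ i k j : V, G.IsNonCollider i k j → ∀ C : Set V, C ⊆ ({i, j, k} : Set V)ᶜ →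
    CI μ X hX {i} {j} C → CI μ X hX {i} {j} (C ∪ {k})

/-- Collider-stability wrt `G`. -/
def ColliderStable (G : DAG V) : Prop :=
  ∀ i k j : V, G.IsCollider i k j →
    ∃ C : Set V, C ⊆ ({i, j, k} : Set V)ᶜ ∧ CI μ X hX {i} {j} C

/-- V-stability of `P`. -/
def VStable : Prop :=
  ∀ i k j : V, VConfigRel (SkP μ X hX) i k j → ∀ C : Set V, C ⊆ ({i, j, k} : Set V)ᶜ →
    ¬ (CI μ X hX {i} {j} C ∧ CI μ X hX {i} {j} (C ∪ {k}))

/-- The orientation rule assigns the v-configuration `i ∼ k ∼ j` of `sk(P)` to be a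
collider. -/
def AssignedCollider (i k j : V) : Prop :=
  VConfigRel (SkP μ X hX) i k j ∧
  ∃ C : Set V, C ⊆ ({i, j, k} : Set V)ᶜ ∧
    CI μ X hX {i} {j} C ∧ ¬ CI μ X hX {i} {j} (C ∪ {k})

/-- The orientation rule assigns the v-configuration `i ∼ k ∼ j` of `sk(P)` to be a
non-collider. -/
def AssignedNonCollider (i k j : V) : Prop :=
  VConfigRel (SkP μ X hX) i k j ∧
  ∀ C : Set V, C ⊆ ({i, j} : Set V)ᶜ → CI μ X hX {i} {j} C → k ∈ C

/-- A DAG `G` satisfies the V-OUS and collider-stable orientation rule wrt `P`. -/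
def SatisfiesRule (G : DAG V) : Prop :=
  SkelEq μ X hX G ∧
  (∀ i k j : V, AssignedCollider μ X hX i k j → G.IsCollider i k j) ∧
  (∀ i k j : V, AssignedNonCollider μ X hX i k j → G.IsNonCollider i k j)

/-- Modified V-stability: any two DAGs `G` with `sk(G) = sk(P)` to which `P` is V-OUS and
collider-stable are Markov equivalent. -/
def ModifiedVStable : Prop :=
  ∀ G₁ G₂ : DAG V,
    SkelEq μ X hX G₁ → VOUS μ X hX G₁ → ColliderStable μ X hX G₁ →
    SkelEq μ X hX G₂ → VOUS μ X hX G₂ → ColliderStable μ X hX G₂ →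
    DAG.MarkovEquiv G₁ G₂

/-- Ordered upward stability wrt `G`. -/
def OUS (G : DAG V) : Prop :=
  ∀ i j k : V, i ≠ j → i ≠ k → j ≠ k → k ∈ G.ancestors {i, j} →
    ∀ C : Set V, C ⊆ ({i, j, k} : Set V)ᶜ →
      CI μ X hX {i} {j} C → CI μ X hX {i} {j} (C ∪ {k})

/-- Ordered downward stability wrt `G`. -/
def ODS (G : DAG V) : Prop :=
  ∀ i j k : V, i ≠ j → i ≠ k → j ≠ k →
    ∀ C : Set V, C ⊆ ({i, j, k} : Set V)ᶜ → k ∉ G.ancestors ({i, j} ∪ C) →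
      CI μ X hX {i} {j} (C ∪ {k}) → CI μ X hX {i} {j} C

end Prob

variable {V : Type*} [Fintype V] {Ω : Type*} [MeasurableSpace Ω] [StandardBorelSpace Ω]
  [Nonempty Ω] {E : V → Type*} [∀ i, MeasurableSpace (E i)]
  (μ : MeasureTheory.Measure Ω) [MeasureTheory.IsProbabilityMeasure μ]
  (X : ∀ i, Ω → E i) (hX : ∀ i, Measurable (X i))

/-- A DAG `G` satisfies the V-OUS and collider-stable orientation rule wrt `P` iff
`sk(P) = sk(G)` and `P` is V-OUS and collider-stable wrt `G`. -/
theorem stmt_1 (G : DAG V) :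
    SatisfiesRule μ X hX G ↔
      (SkelEq μ X hX G ∧ VOUS μ X hX G ∧ ColliderStable μ X hX G) := by
  classical
  constructor
  · rintro ⟨hskel, hcol, hnc⟩
    refine ⟨hskel, ?_, ?_⟩
    · -- VOUS
      intro i k j hNC C hC hCI
      by_contra hnot
      have hvc : VConfigRel (SkP μ X hX) i k j := by
        obtain ⟨h1, h2, h3, h4, h5, h6⟩ := hNC.1
        exact ⟨h1, h2, h3, (hskel i k).mp h4, (hskel j k).mp h5,
          fun h => h6 ((hskel i j).mpr h)⟩
      have := hcol i k j ⟨hvc, C, hC, hCI, hnot⟩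
      exact hNC.2 ⟨this.2.1, this.2.2⟩
    · -- ColliderStable
      intro i k j hIC
      by_contra hnot
      push_neg at hnot
      have hvc : VConfigRel (SkP μ X hX) i k j := by
        obtain ⟨h1, h2, h3, h4, h5, h6⟩ := hIC.1
        exact ⟨h1, h2, h3, (hskel i k).mp h4, (hskel j k).mp h5,
          fun h => h6 ((hskel i j).mpr h)⟩
      have hassigned : AssignedNonCollider μ X hX i k j := by
        refine ⟨hvc, fun C hC hCI => ?_⟩
        by_contra hk
        refine hnot C ?_ hCI
        intro x hx
        have hxij : x ∉ ({i, j} : Set V) := hC hx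
        intro hmem
        simp only [Set.mem_insert_iff, Set.mem_singleton_iff] at hmem hxij
        rcases hmem with rfl | rfl | rfl
        · exact hxij (Or.inl rfl)
        · exact hxij (Or.inr rfl)
        · exact hk hx
      exact (hnc i k j hassigned).2 ⟨hIC.2.1, hIC.2.2⟩
  · rintro ⟨hskel, hvous, hcs⟩
    refine ⟨hskel, ?_, ?_⟩
    · rintro i k j ⟨hvc, C, hC, hCI, hnCI⟩
      obtain ⟨h1, h2, h3, h4, h5, h6⟩ := hvc
      have hvcG : G.VConfig i k j :=
        ⟨h1, h2, h3, (hskel i k).mpr h4, (hskel j k).mpr h5,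
          fun h => h6 ((hskel i j).mp h)⟩
      by_cases he : G.Edge i k ∧ G.Edge j k
      · exact ⟨hvcG, he.1, he.2⟩
      · exact absurd (hvous i k j ⟨hvcG, he⟩ C hC hCI) hnCI
    · rintro i k j ⟨hvc, hall⟩
      obtain ⟨h1, h2, h3, h4, h5, h6⟩ := hvc
      have hvcG : G.VConfig i k j :=
        ⟨h1, h2, h3, (hskel i k).mpr h4, (hskel j k).mpr h5,
          fun h => h6 ((hskel i j).mp h)⟩
      by_cases he : G.Edge i k ∧ G.Edge j k
      · obtain ⟨C, hC, hCI⟩ := hcs i k j ⟨hvcG, he.1, he.2⟩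
        have hkC : k ∈ C := by
          refine hall C ?_ hCI
          intro x hx
          have hxn := hC hx
          intro hmem
          simp only [Set.mem_insert_iff, Set.mem_singleton_iff] at hmem hxn
          exact hxn (by tauto)
        have := hC hkC
        simp at this
      · exact ⟨hvcG, he⟩
end

section
/- Let P be Markovian to a DAG G_0 on V, and suppose there exists at least one DAG G with sk(G) = sk(P) such that P is V-OUS and collider-stable with respect to G. Then every DAG G with sk(G) = sk(P) such that P is V-OUS and collider-stable with respect to G is Markov equivalent to G_0, if and only if the following three conditions hold: (1) P is adjacency faithful with respect to G_0; (2) P is V-OUS and collider-stable with respect to G_0; (3) P is modified V-stable. -/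
open MeasureTheory ProbabilityTheory

section AuxGraph

namespace DAG

variable {V : Type*}

lemma not_edge_self (G : DAG V) (i : V) : ¬ G.Edge i i :=
  fun h => G.acyclic i (Relation.TransGen.single h)

lemma edge_asymm (G : DAG V) {i j : V} (h : G.Edge i j) : ¬ G.Edge j i :=
  fun h' => G.acyclic i ((Relation.TransGen.single h).tail h')

lemma Adj.ne {G : DAG V} {i j : V} (h : G.Adj i j) : i ≠ j := by
  rintro rfl
  rcases h with h | h <;> exact G.not_edge_self i h

lemma Adj.symm' {G : DAG V} {i j : V} (h : G.Adj i j) : G.Adj j i := h.symm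

/-- The single-edge path between adjacent vertices. -/
def singlePath (G : DAG V) {i j : V} (h : G.Adj i j) : Path G i j where
  n := 1
  npos := one_pos
  f := ![i, j]
  first := rfl
  last := rfl
  adj := fun t => by fin_cases t; simpa using h
  inj := by
    have hne := h.ne
    intro a b hab
    fin_cases a <;> fin_cases b <;> simp_all

lemma not_dSep_of_adj (G : DAG V) {i j : V} (h : G.Adj i j) (C : Set V) :
    ¬ G.dSep {i} {j} C := by
  intro hd
  obtain ⟨t, h1, h2, -⟩ := hd i rfl j rfl (G.singlePath h)
  have hn : (G.singlePath h).n = 1 := rfl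
  omega

/-- The two-edge path through `k`. -/
def twoPath (G : DAG V) {i k j : V} (hik : G.Adj i k) (hkj : G.Adj k j)
    (hij : i ≠ j) : Path G i j where
  n := 2
  npos := two_pos
  f := ![i, k, j]
  first := rfl
  last := rfl
  adj := fun t => by fin_cases t <;> simp [Fin.succ] <;> [exact hik; exact hkj]
  inj := by
    have h1 := hik.ne
    have h2 := hkj.ne
    intro a b hab
    fin_cases a <;> fin_cases b <;> simp_all

lemma mem_of_dSep_two {G : DAG V} {i k j : V} (hik : G.Adj i k) (hkj : G.Adj k j)
    (hij : i ≠ j) (hnc : ¬ (G.Edge i k ∧ G.Edge j k)) {C : Set V}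
    (hd : G.dSep {i} {j} C) : k ∈ C := by
  obtain ⟨t, h1, h2, hcase⟩ := hd i rfl j rfl (G.twoPath hik hkj hij)
  have hn : (G.twoPath hik hkj hij).n = 2 := rfl
  have ht : t = 1 := by omega
  subst ht
  rcases hcase with ⟨-, hmem⟩ | ⟨hcol, -⟩
  · exact hmem
  · exact absurd hcol.2 (fun h => hnc ⟨hcol.1, h⟩)

/-- Key separation lemma: if `i` and `j` are non-adjacent and `i` is not a descendant of
`j`, then the parents of `j` d-separate `i` from `j`. -/
lemma dSep_parents (G : DAG V) {a b : V} (hnadj : ¬ G.Adj a b)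
    (hji : ¬ Relation.TransGen G.Edge b a) :
    G.dSep {a} {b} {m | G.Edge m b} := by
  intro x hx y hy π
  obtain rfl : a = x := hx.symm
  obtain rfl : b = y := hy.symm
  have npos := π.npos
  set n := π.n with hn
  have hf0 : π.f ⟨0, by omega⟩ = a := π.first
  have hfn : π.f ⟨n, by omega⟩ = b := π.last
  have hadj : ∀ t (ht : t < n), G.Adj (π.f ⟨t, by omega⟩) (π.f ⟨t + 1, by omega⟩) :=
    fun t ht => π.adj ⟨t, ht⟩
  have hn2 : 2 ≤ n := by
    by_contra hcon
    have h1 : n = 1 := by omega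
    have h := hadj 0 (by omega)
    rw [hf0] at h
    have e : π.f ⟨0 + 1, by omega⟩ = π.f ⟨n, by omega⟩ :=
      congrArg π.f (by simp only [Fin.mk.injEq]; omega)
    rw [e, hfn] at h
    exact hnadj h
  obtain ⟨g, hgf⟩ : ∃ g : ℕ → V, ∀ t (ht : t ≤ n), g t = π.f ⟨t, Nat.lt_succ_of_le ht⟩ :=
    ⟨fun t => π.f ⟨min t n, Nat.lt_succ_of_le (min_le_right t n)⟩,
     fun t ht => congrArg π.f (Fin.ext (by simp [Nat.min_eq_left ht]))⟩
  have hgn : g n = b := by rw [hgf n le_rfl]; exact hfn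
  have hg0 : g 0 = a := by rw [hgf 0 (by omega)]; exact hf0
  have hgadj : ∀ t, t < n → G.Adj (g t) (g (t + 1)) := by
    intro t ht
    rw [hgf t (by omega), hgf (t + 1) (by omega)]
    exact hadj t ht
  by_cases hlast : G.Edge (g (n - 1)) b
  · refine ⟨n - 1, by omega, by omega, Or.inl ⟨?_, ?_⟩⟩
    · rintro ⟨-, h2⟩
      have e : π.f ⟨n - 1 + 1, by omega⟩ = b := by
        rw [show (⟨n - 1 + 1, by omega⟩ : Fin (n + 1)) = ⟨n, by omega⟩ from by
          simp only [Fin.mk.injEq]; omega]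
        exact hfn
      rw [e, ← hgf (n - 1) (by omega)] at h2
      exact G.edge_asymm hlast h2
    · show G.Edge (π.f ⟨n - 1, by omega⟩) b
      rw [← hgf (n - 1) (by omega)]
      exact hlast
  · have hjm : G.Edge b (g (n - 1)) := by
      have h := hgadj (n - 1) (by omega)
      rw [show n - 1 + 1 = n from by omega, hgn] at h
      rcases h with h | h
      · exact absurd h hlast
      · exact h
    set T : Set ℕ := {t | ∀ s, t ≤ s → s < n → G.Edge (g (s + 1)) (g s)} with hT
    have hTmem : n - 1 ∈ T := by
      intro s hs1 hs2
      have hs : s = n - 1 := by omega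
      subst hs
      rw [show n - 1 + 1 = n from by omega, hgn]
      exact hjm
    have hTne : T.Nonempty := ⟨n - 1, hTmem⟩
    set s₀ := sInf T with hs0
    have hs₀T : s₀ ∈ T := Nat.sInf_mem hTne
    have hs₀le : s₀ ≤ n - 1 := Nat.sInf_le hTmem
    have chain : ∀ d t, t + d = n → t < n → s₀ ≤ t → Relation.TransGen G.Edge (g n) (g t) := by
      intro d
      induction d with
      | zero => intro t ht1 ht2 _; omega
      | succ d ih =>
        intro t ht1 ht2 hle
        have he : G.Edge (g (t + 1)) (g t) := hs₀T t hle ht2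
        rcases Nat.lt_or_ge (t + 1) n with hlt | hge
        · exact (ih (t + 1) (by omega) hlt (by omega)).tail he
        · rw [show t + 1 = n from by omega] at he
          exact Relation.TransGen.single he
    have hs₀pos : 0 < s₀ := by
      rcases Nat.eq_zero_or_pos s₀ with hz | hp
      · exfalso
        have hc := chain n 0 (by omega) (by omega) (by omega)
        rw [hgn, hg0] at hc
        exact hji hc
      · exact hp
    have hchain₀ : Relation.TransGen G.Edge b (g s₀) := by
      have hc := chain (n - s₀) s₀ (by omega) (by omega) le_rfl
      rwa [hgn] at hc
    have hstep : ¬ G.Edge (g s₀) (g (s₀ - 1)) := by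
      intro he
      have hmem : s₀ - 1 ∈ T := by
        intro s hs1 hs2
        rcases Nat.lt_or_ge s s₀ with hlt | hge
        · have hs : s = s₀ - 1 := by omega
          subst hs
          rw [show s₀ - 1 + 1 = s₀ from by omega]
          exact he
        · exact hs₀T s hge hs2
      have := Nat.sInf_le hmem
      omega
    have hcol1 : G.Edge (g (s₀ - 1)) (g s₀) := by
      have h := hgadj (s₀ - 1) (by omega)
      rw [show s₀ - 1 + 1 = s₀ from by omega] at h
      rcases h with h | h
      · exact h
      · exact absurd h hstep
    refine ⟨s₀, hs₀pos, by omega, Or.inr ⟨⟨?_, ?_⟩, ?_⟩⟩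
    · rw [← hgf (s₀ - 1) (by omega), ← hgf s₀ (by omega)]
      exact hcol1
    · rw [← hgf (s₀ + 1) (by omega), ← hgf s₀ (by omega)]
      exact hs₀T s₀ le_rfl (by omega)
    · rw [← hgf s₀ (by omega)]
      rintro (hmem | ⟨-, p, hp, htp⟩)
      · exact G.acyclic b (hchain₀.tail hmem)
      · exact G.acyclic b ((hchain₀.trans htp).tail hp)

lemma exists_sep (G : DAG V) {i j : V} (hne : i ≠ j) (hnadj : ¬ G.Adj i j) :
    ∃ C : Set V, C ⊆ ({i, j} : Set V)ᶜ ∧ (∀ m ∈ C, G.Edge m i ∨ G.Edge m j) ∧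
      (G.dSep {i} {j} C ∨ G.dSep {j} {i} C) := by
  by_cases hji : Relation.TransGen G.Edge j i
  · have hij : ¬ Relation.TransGen G.Edge i j := fun h => G.acyclic i (h.trans hji)
    refine ⟨{m | G.Edge m i}, ?_, fun m hm => Or.inl hm,
      Or.inr (G.dSep_parents (fun h => hnadj h.symm') hij)⟩
    intro m hm
    simp only [Set.mem_compl_iff, Set.mem_insert_iff, Set.mem_singleton_iff]
    rintro (rfl | rfl)
    · exact G.not_edge_self _ hm
    · exact hnadj (Or.inr hm)
  · refine ⟨{m | G.Edge m j}, ?_, fun m hm => Or.inr hm,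
      Or.inl (G.dSep_parents hnadj hji)⟩
    intro m hm
    simp only [Set.mem_compl_iff, Set.mem_insert_iff, Set.mem_singleton_iff]
    rintro (rfl | rfl)
    · exact hnadj (Or.inl hm)
    · exact G.not_edge_self _ hm

lemma MarkovEquiv.msymm {G₁ G₂ : DAG V} (h : MarkovEquiv G₁ G₂) : MarkovEquiv G₂ G₁ :=
  fun A B C d1 d2 d3 => (h A B C d1 d2 d3).symm

lemma MarkovEquiv.mtrans {G₁ G₂ G₃ : DAG V} (h : MarkovEquiv G₁ G₂)
    (h' : MarkovEquiv G₂ G₃) : MarkovEquiv G₁ G₃ :=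
  fun A B C d1 d2 d3 => (h A B C d1 d2 d3).trans (h' A B C d1 d2 d3)

lemma MarkovEquiv.adj {G₁ G₂ : DAG V} (h : MarkovEquiv G₁ G₂) {i j : V}
    (hadj : G₁.Adj i j) : G₂.Adj i j := by
  by_contra hnadj
  have hne : i ≠ j := hadj.ne
  obtain ⟨C, hsub, -, hd⟩ := G₂.exists_sep hne hnadj
  have hiC : i ∉ C := fun hc => hsub hc (by simp)
  have hjC : j ∉ C := fun hc => hsub hc (by simp)
  rcases hd with hd | hd
  · exact G₁.not_dSep_of_adj hadj C
      ((h {i} {j} C (Set.disjoint_singleton.mpr hne) (Set.disjoint_singleton_left.mpr hiC)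
        (Set.disjoint_singleton_left.mpr hjC)).mpr hd)
  · exact G₁.not_dSep_of_adj hadj.symm' C
      ((h {j} {i} C (Set.disjoint_singleton.mpr hne.symm) (Set.disjoint_singleton_left.mpr hjC)
        (Set.disjoint_singleton_left.mpr hiC)).mpr hd)

lemma MarkovEquiv.vconfig {G₁ G₂ : DAG V} (h : MarkovEquiv G₁ G₂) {i k j : V}
    (hv : G₁.VConfig i k j) : G₂.VConfig i k j := by
  obtain ⟨hij, hik, hjk, haik, hajk, hnadj⟩ := hv
  exact ⟨hij, hik, hjk, h.adj haik, h.adj hajk, fun ha => hnadj (h.msymm.adj ha)⟩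

lemma MarkovEquiv.collider {G₁ G₂ : DAG V} (h : MarkovEquiv G₁ G₂) {i k j : V}
    (hc : G₁.IsCollider i k j) : G₂.IsCollider i k j := by
  obtain ⟨hv, e1, e2⟩ := hc
  have hv2 : G₂.VConfig i k j := h.vconfig hv
  obtain ⟨hij, hik, hjk, haik2, hajk2, hnadj2⟩ := hv2
  by_contra hncol
  have hnc : ¬ (G₂.Edge i k ∧ G₂.Edge j k) := fun hb =>
    hncol ⟨⟨hij, hik, hjk, haik2, hajk2, hnadj2⟩, hb.1, hb.2⟩
  obtain ⟨C, hsub, hpa, hd⟩ := G₁.exists_sep hij hv.2.2.2.2.2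
  have hkC : k ∉ C := by
    intro hk
    rcases hpa k hk with he | he
    · exact G₁.edge_asymm e1 he
    · exact G₁.edge_asymm e2 he
  have hiC : i ∉ C := fun hc => hsub hc (by simp)
  have hjC : j ∉ C := fun hc => hsub hc (by simp)
  rcases hd with hd | hd
  · have hd2 := (h {i} {j} C (Set.disjoint_singleton.mpr hij)
      (Set.disjoint_singleton_left.mpr hiC) (Set.disjoint_singleton_left.mpr hjC)).mp hd
    exact hkC (mem_of_dSep_two haik2 hajk2.symm' hij hnc hd2)
  · have hd2 := (h {j} {i} C (Set.disjoint_singleton.mpr hij.symm)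
      (Set.disjoint_singleton_left.mpr hjC) (Set.disjoint_singleton_left.mpr hiC)).mp hd
    exact hkC (mem_of_dSep_two hajk2 haik2.symm' hij.symm
      (fun hb => hnc ⟨hb.2, hb.1⟩) hd2)

lemma MarkovEquiv.noncollider {G₁ G₂ : DAG V} (h : MarkovEquiv G₁ G₂) {i k j : V}
    (hc : G₁.IsNonCollider i k j) : G₂.IsNonCollider i k j := by
  obtain ⟨hv, hne⟩ := hc
  refine ⟨h.vconfig hv, fun hb => ?_⟩
  have : G₂.IsCollider i k j := ⟨h.vconfig hv, hb.1, hb.2⟩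
  exact hne ⟨(h.msymm.collider this).2.1, (h.msymm.collider this).2.2⟩

end DAG

end AuxGraph


section CISymm

variable {V : Type*} {Ω : Type*} [MeasurableSpace Ω] [StandardBorelSpace Ω] [Nonempty Ω]
  {E : V → Type*} [∀ i, MeasurableSpace (E i)]

lemma CI_symm (μ : Measure Ω) [IsFiniteMeasure μ] (X : ∀ i, Ω → E i)
    (hX : ∀ i, Measurable (X i)) {A B C : Set V} (h : CI μ X hX A B C) :
    CI μ X hX B A C :=
  ProbabilityTheory.Kernel.IndepFun.symm h

end CISymm


variable {V : Type*} [Fintype V] {Ω : Type*} [MeasurableSpace Ω] [StandardBorelSpace Ω]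
  [Nonempty Ω] {E : V → Type*} [∀ i, MeasurableSpace (E i)]
  (μ : MeasureTheory.Measure Ω) [MeasureTheory.IsProbabilityMeasure μ]
  (X : ∀ i, Ω → E i) (hX : ∀ i, Measurable (X i))

/-- Sufficient and necessary consistency conditions for LoNS algorithms. -/
theorem stmt_2 (G₀ : DAG V) (hM : MarkovTo μ X hX G₀)
    (hexists : ∃ G : DAG V, SkelEq μ X hX G ∧ VOUS μ X hX G ∧ ColliderStable μ X hX G) :
    (∀ G : DAG V, SkelEq μ X hX G → VOUS μ X hX G → ColliderStable μ X hX G →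
        DAG.MarkovEquiv G G₀) ↔
      (AdjFaithful μ X hX G₀ ∧ (VOUS μ X hX G₀ ∧ ColliderStable μ X hX G₀) ∧
        ModifiedVStable μ X hX) := by 
  obtain ⟨G, hGsk, hGv, hGc⟩ := hexists
  constructor
  · intro h
    have hGG₀ : DAG.MarkovEquiv G G₀ := h G hGsk hGv hGc
    refine ⟨?_, ⟨?_, ?_⟩, ?_⟩
    · intro i j hadj hex
      have hne : i ≠ j := hadj.ne
      have hnskp : ¬ SkP μ X hX i j := fun hs => hs.2 hex
      have hnadjG : ¬ G.Adj i j := fun ha => hnskp ((hGsk i j).mp ha)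
      obtain ⟨C, hsub, -, hd⟩ := G.exists_sep hne hnadjG
      have hiC : i ∉ C := fun hc => hsub hc (by simp)
      have hjC : j ∉ C := fun hc => hsub hc (by simp)
      rcases hd with hd | hd
      · exact G₀.not_dSep_of_adj hadj C
          ((hGG₀ {i} {j} C (Set.disjoint_singleton.mpr hne)
            (Set.disjoint_singleton_left.mpr hiC) (Set.disjoint_singleton_left.mpr hjC)).mp hd)
      · exact G₀.not_dSep_of_adj hadj.symm' C
          ((hGG₀ {j} {i} C (Set.disjoint_singleton.mpr hne.symm)
            (Set.disjoint_singleton_left.mpr hjC) (Set.disjoint_singleton_left.mpr hiC)).mp hd)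
    · intro i k j hnc C hsub hci
      exact hGv i k j (hGG₀.msymm.noncollider hnc) C hsub hci
    · intro i k j hc
      exact hGc i k j (hGG₀.msymm.collider hc)
    · intro G₁ G₂ h1 h2 h3 h4 h5 h6
      exact (h G₁ h1 h2 h3).mtrans (h G₂ h4 h5 h6).msymm
  · rintro ⟨hAF, ⟨hV0, hC0⟩, hMV⟩
    intro G' h1 h2 h3
    have hskel : SkelEq μ X hX G₀ := by
      intro i j
      constructor
      · intro hadj
        exact ⟨hadj.ne, hAF i j hadj⟩
      · rintro ⟨hne, hno⟩
        by_contra hnadj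
        obtain ⟨C, hsub, -, hd⟩ := G₀.exists_sep hne hnadj
        have hiC : i ∉ C := fun hc => hsub hc (by simp)
        have hjC : j ∉ C := fun hc => hsub hc (by simp)
        rcases hd with hd | hd
        · exact hno ⟨C, hsub, hM {i} {j} C (Set.disjoint_singleton.mpr hne)
            (Set.disjoint_singleton_left.mpr hiC) (Set.disjoint_singleton_left.mpr hjC) hd⟩
        · exact hno ⟨C, hsub, CI_symm μ X hX (hM {j} {i} C (Set.disjoint_singleton.mpr hne.symm)
            (Set.disjoint_singleton_left.mpr hjC) (Set.disjoint_singleton_left.mpr hiC) hd)⟩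
    exact hMV G' G₀ h1 h2 h3 hskel hV0 hC0
end

section
/- Any two DAGs satisfying the V-OUS and collider-stable orientation rule with respect to P have exactly the same set of collider v-configurations, if and only if any two DAGs G with sk(G) = sk(P) such that P is V-OUS and collider-stable with respect to G are Markov equivalent. -/
open MeasureTheory ProbabilityTheory

/-!
When `sk(G) = sk(P)`, the collider clause of the orientation rule says exactly that `P` is V-OUS
wrt `G`, and its non-collider clause that `P` is collider-stable wrt `G`. Both sides of the
equivalence therefore quantify over the same DAGs, which all share the skeleton of `P`, and the
theorem reduces to the classical fact that DAGs with a common skeleton are Markov equivalent iff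
they have the same colliders.

If `i → k ← j` is a collider of one DAG, the parents of `j` (say) d-separate `i` and `j` there,
whereas a non-collider `i ∼ k ∼ j` in the other DAG would connect them. Conversely (Verma–Pearl),
following Chickering, one DAG is turned into the other by reversing covered edges `x → y`, those
with `pa(y) = pa(x) ∪ {x}`; each reversal preserves d-separation, since an unblocked path can be
repaired locally around the reversed edge.
-/

namespace DAG

open Relation

variable {V : Type*} {G H G₁ G₂ : DAG V} {C : Set V} {a b u v w x y i j k : V}

@[ext] lemma ext (h : ∀ u v, G₁.Edge u v ↔ G₂.Edge u v) : G₁ = G₂ := by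
  cases G₁
  cases G₂
  congr
  funext u v
  exact propext (h u v)

lemma not_transGen_of_edge (h : G.Edge u v) : ¬ TransGen G.Edge v u :=
  fun h' => G.acyclic u (h'.head h)

lemma edge_asymm_s3 (h : G.Edge u v) : ¬ G.Edge v u :=
  fun h' => not_transGen_of_edge h (.single h')

lemma ne_of_edge (h : G.Edge u v) : u ≠ v := by
  rintro rfl
  exact edge_asymm_s3 h h

lemma Adj.symm (h : G.Adj u v) : G.Adj v u := Or.symm h

lemma mem_union_ancestors_iff :
    u ∈ C ∪ G.ancestors C ↔ u ∈ C ∨ ∃ c ∈ C, TransGen G.Edge u c := by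
  by_cases hu : u ∈ C <;> simp [ancestors, hu]

lemma mem_union_ancestors_of_transGen (h : TransGen G.Edge u v)
    (hv : v ∈ C ∪ G.ancestors C) : u ∈ C ∪ G.ancestors C := by
  rw [mem_union_ancestors_iff] at hv ⊢
  rcases hv with hv | ⟨c, hc, hvc⟩
  · exact .inr ⟨v, hv, h⟩
  · exact .inr ⟨c, hc, h.trans hvc⟩

lemma mem_union_ancestors_of_edge (h : G.Edge u v) (hv : v ∈ C ∪ G.ancestors C) :
    u ∈ C ∪ G.ancestors C :=
  mem_union_ancestors_of_transGen (.single h) hv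

lemma MarkovEquiv.refl (G : DAG V) : G.MarkovEquiv G := fun _ _ _ _ _ _ => Iff.rfl

lemma MarkovEquiv.symm (h : G₁.MarkovEquiv G₂) : G₂.MarkovEquiv G₁ :=
  fun A B C hAB hAC hBC => (h A B C hAB hAC hBC).symm

lemma MarkovEquiv.trans {G₃ : DAG V} (h₁₂ : G₁.MarkovEquiv G₂)
    (h₂₃ : G₂.MarkovEquiv G₃) : G₁.MarkovEquiv G₃ :=
  fun A B C hAB hAC hBC => (h₁₂ A B C hAB hAC hBC).trans (h₂₃ A B C hAB hAC hBC)

/-- The condition that a path through `u ∼ v ∼ w` is not blocked by `C` at `v`. -/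
def ActiveTriple (G : DAG V) (C : Set V) (u v w : V) : Prop :=
  (G.Edge u v ∧ G.Edge w v → v ∈ C ∪ G.ancestors C) ∧ (¬ (G.Edge u v ∧ G.Edge w v) → v ∉ C)

lemma ActiveTriple.symm (h : G.ActiveTriple C u v w) : G.ActiveTriple C w v u :=
  ⟨fun hc => h.1 hc.symm, fun hc => h.2 fun hc' => hc hc'.symm⟩

lemma ActiveTriple.edge_of_mem (h : G.ActiveTriple C u v w) (hv : v ∈ C) :
    G.Edge u v ∧ G.Edge w v := by
  by_contra hc
  exact h.2 hc hv

lemma ActiveTriple.transfer (h : G.ActiveTriple C u v w) {u' w' : V}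
    (hu : H.Edge u' v ↔ G.Edge u v) (hw : H.Edge w' v ↔ G.Edge w v)
    (hv : G.Edge u v → G.Edge w v → v ∈ C ∪ G.ancestors C → v ∈ C ∪ H.ancestors C) :
    H.ActiveTriple C u' v w' := by
  unfold ActiveTriple at h ⊢
  rw [hu, hw]
  exact ⟨fun hc => hv hc.1 hc.2 (h.1 hc), h.2⟩

lemma ActiveTriple.of_not_collider (h : G.ActiveTriple C u v w)
    (hG : ¬ (G.Edge u v ∧ G.Edge w v)) {u' w' : V} (hH : ¬ (H.Edge u' v ∧ H.Edge w' v)) :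
    H.ActiveTriple C u' v w' :=
  ⟨fun hc => absurd hc hH, fun _ => h.2 hG⟩

/-- A walk `f 0, …, f n` from `a` to `b` (vertices may repeat) that is not blocked by `C`;
its triple at `t` is centred at `f (t + 1)`. -/
structure ActiveWalk (G : DAG V) (C : Set V) (a b : V) where
  n : ℕ
  f : ℕ → V
  first : f 0 = a
  last : f n = b
  adj : ∀ t < n, G.Adj (f t) (f (t + 1))
  active : ∀ t, t + 2 ≤ n → G.ActiveTriple C (f t) (f (t + 1)) (f (t + 2))

namespace ActiveWalk

def reverse (W : ActiveWalk G C a b) : ActiveWalk G C b a where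
  n := W.n
  f t := W.f (W.n - t)
  first := by simpa using W.last
  last := by simpa using W.first
  adj t ht := by
    have h := W.adj (W.n - (t + 1)) (by omega)
    rw [show W.n - (t + 1) + 1 = W.n - t by omega] at h
    exact h.symm
  active t ht := by
    have h := W.active (W.n - (t + 2)) (by omega)
    rw [show W.n - (t + 2) + 1 = W.n - (t + 1) by omega,
      show W.n - (t + 2) + 2 = W.n - t by omega] at h
    exact h.symm

lemma injOn_reverse {W : ActiveWalk G C a b} (h : Set.InjOn W.f (Set.Iic W.n)) :
    Set.InjOn W.reverse.f (Set.Iic W.reverse.n) := by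
  intro s hs t ht hst
  have := h (show W.n - s ≤ W.n by omega) (show W.n - t ≤ W.n by omega) hst
  simp only [reverse, Set.mem_Iic] at hs ht this
  omega

lemma ne_of_injOn {W : ActiveWalk G C a b} (hinj : Set.InjOn W.f (Set.Iic W.n)) {s t : ℕ}
    (hs : s ≤ W.n) (ht : t ≤ W.n) (hst : s ≠ t) : W.f s ≠ W.f t :=
  fun h => hst (hinj hs ht h)

/-- Following the walk forward from `f s` along edges pointing forward, either we reach `f m`,
or the first backward edge creates a collider, which must lie in `C ∪ an(C)`. -/
lemma mem_or_transGen (W : ActiveWalk G C a b) {s m : ℕ} (hsm : s < m) (hm : m ≤ W.n)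
    (h : G.Edge (W.f s) (W.f (s + 1))) :
    W.f s ∈ C ∪ G.ancestors C ∨ TransGen G.Edge (W.f s) (W.f m) := by
  obtain ⟨d, rfl⟩ : ∃ d, m = s + 1 + d := ⟨m - s - 1, by omega⟩
  clear hsm
  induction d generalizing s with
  | zero => exact .inr (.single h)
  | succ d ih =>
    by_cases hf : G.Edge (W.f (s + 1)) (W.f (s + 2))
    · rcases ih (s := s + 1) hf (by omega) with hmem | htr
      · exact .inl (mem_union_ancestors_of_edge h hmem)
      · exact .inr (.head h (by rwa [show s + 1 + 1 + d = s + 1 + (d + 1) by omega] at htr))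
    · have hback : G.Edge (W.f (s + 2)) (W.f (s + 1)) :=
        (W.adj (s + 1) (by omega)).resolve_left hf
      exact .inl (mem_union_ancestors_of_edge h ((W.active s (by omega)).1 ⟨h, hback⟩))

/-- The triple created by cutting out the loop between two visits of `v = f (r + 1)`. If it is a
collider with `v ∉ C`, either `v` was a collider at its first visit, or the walk leaves `v`
forward and `mem_or_transGen` finds a collider below `v` (a directed path from `v` to
`f (t + 1)` would close a cycle). -/
lemma activeTriple_of_revisit (W : ActiveWalk G C a b) {r t : ℕ} (hrt : r + 1 < t) (ht : t < W.n)
    (he : W.f (r + 1) = W.f t) : G.ActiveTriple C (W.f r) (W.f (r + 1)) (W.f (t + 1)) := by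
  have hr := W.active r (by omega)
  have ht' := W.active (t - 1) (by omega)
  rw [show t - 1 + 1 = t by omega, show t - 1 + 2 = t + 1 by omega, ← he] at ht'
  by_cases hC : W.f (r + 1) ∈ C
  · exact ⟨fun _ => .inl hC, fun hc _ => hc ⟨(hr.edge_of_mem hC).1, (ht'.edge_of_mem hC).2⟩⟩
  refine ⟨fun hc => ?_, fun _ => hC⟩
  by_cases hf : G.Edge (W.f (r + 1)) (W.f (r + 2))
  · rcases W.mem_or_transGen (m := t + 1) (by omega) (by omega) hf with hmem | htr
    · exact hmem
    · exact absurd htr (not_transGen_of_edge hc.2)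
  · exact hr.1 ⟨hc.1, (W.adj (r + 1) (by omega)).resolve_left hf⟩

/-- Cutting out the closed subwalk between two visits of the same vertex. -/
lemma exists_shorter (W : ActiveWalk G C a b) {s t : ℕ} (hst : s < t)
    (ht : t ≤ W.n) (he : W.f s = W.f t) : ∃ W' : ActiveWalk G C a b, W'.n < W.n := by
  set d := t - s
  let g : ℕ → V := fun i => if i ≤ s then W.f i else W.f (i + d)
  have hg_le : ∀ i ≤ s, g i = W.f i := fun i hi => if_pos hi
  have hg_ge : ∀ i ≥ s, g i = W.f (i + d) := by
    intro i hi
    rcases hi.eq_or_lt with h | h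
    · subst h
      rw [hg_le s le_rfl, he]
      congr 1
      omega
    · exact if_neg (by omega)
  have hn : s ≤ W.n - d := by omega
  refine ⟨⟨W.n - d, g, ?_, ?_, fun r hr => ?_, fun r hr => ?_⟩, show W.n - d < W.n by omega⟩
  · rw [hg_le 0 (by omega), W.first]
  · rw [hg_ge _ hn, show W.n - d + d = W.n by omega, W.last]
  · rcases lt_or_ge r s with hrs | hrs
    · rw [hg_le r hrs.le, hg_le (r + 1) hrs]
      exact W.adj r (by omega)
    · rw [hg_ge r hrs, hg_ge (r + 1) (by omega), show r + 1 + d = r + d + 1 by omega]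
      exact W.adj (r + d) (by omega)
  · rcases lt_trichotomy (r + 1) s with hrs | hrs | hrs
    · rw [hg_le r (by omega), hg_le (r + 1) (by omega), hg_le (r + 2) (by omega)]
      exact W.active r (by omega)
    · rw [hg_le r (by omega), hg_le (r + 1) (by omega), hg_ge (r + 2) (by omega),
        show r + 2 + d = t + 1 by omega]
      exact W.activeTriple_of_revisit (by omega) (by omega) (by rwa [hrs])
    · rw [hg_ge r (by omega), hg_ge (r + 1) (by omega), hg_ge (r + 2) (by omega),
        show r + 1 + d = r + d + 1 by omega, show r + 2 + d = r + d + 2 by omega]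
      exact W.active (r + d) (by omega)

lemma exists_injOn (W : ActiveWalk G C a b) :
    ∃ W' : ActiveWalk G C a b, Set.InjOn W'.f (Set.Iic W'.n) := by
  induction hN : W.n using Nat.strong_induction_on generalizing W with
  | _ N ih =>
    by_cases hinj : Set.InjOn W.f (Set.Iic W.n)
    · exact ⟨W, hinj⟩
    simp only [Set.InjOn, Set.mem_Iic, not_forall] at hinj
    obtain ⟨s, hs, t, ht, he, hne⟩ := hinj
    obtain ⟨W', hW'⟩ := (lt_or_gt_of_ne hne).elim (W.exists_shorter · ht he)
      (W.exists_shorter · hs he.symm)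
    exact ih _ (hN ▸ hW') W' rfl

def ofPath (π : Path G a b) (hπ : ¬ π.Blocked C) : ActiveWalk G C a b where
  n := π.n
  f t := π.f ⟨min t π.n, by omega⟩
  first := by
    convert π.first using 2
    ext
    simp
  last := by
    convert π.last using 2
    ext
    simp
  adj t ht := by
    convert π.adj ⟨t, ht⟩ using 2 <;> simp [Fin.ext_iff] <;> omega
  active t ht := by
    simp only [Path.Blocked, Path.ColliderAt, not_exists, not_or] at hπ
    obtain ⟨h₁, h₂⟩ := hπ (t + 1) (by omega) (by omega)
    have e : ∀ s (hs : s ≤ π.n), π.f ⟨min s π.n, by omega⟩ = π.f ⟨s, by omega⟩ := by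
      intro s hs
      congr
      omega
    rw [e t (by omega), e (t + 1) (by omega), e (t + 2) (by omega)]
    exact ⟨fun hc => not_not.1 fun hn => h₂ ⟨hc, hn⟩, fun hnc hm => h₁ ⟨hnc, hm⟩⟩

lemma injOn_ofPath (π : Path G a b) (hπ : ¬ π.Blocked C) :
    Set.InjOn (ofPath π hπ).f (Set.Iic (ofPath π hπ).n) := by
  intro s hs t ht he
  simp only [ofPath, Set.mem_Iic] at hs ht he
  have := congrArg Fin.val (π.inj he)
  simp only at this
  omega

def toPath (W : ActiveWalk G C a b) (hinj : Set.InjOn W.f (Set.Iic W.n)) (hab : a ≠ b) :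
    Path G a b where
  n := W.n
  npos := Nat.pos_of_ne_zero fun h => hab (W.first.symm.trans (h ▸ W.last))
  f i := W.f i
  first := W.first
  last := W.last
  adj i := W.adj i i.isLt
  inj i j h := Fin.ext (hinj (Nat.lt_succ_iff.1 i.isLt) (Nat.lt_succ_iff.1 j.isLt) h)

lemma not_blocked_toPath (W : ActiveWalk G C a b) (hinj : Set.InjOn W.f (Set.Iic W.n))
    (hab : a ≠ b) : ¬ (W.toPath hinj hab).Blocked C := by
  rintro ⟨t, h₁, h₂, hb⟩
  have h := W.active (t - 1) (by simp [toPath] at h₂; omega)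
  rw [show t - 1 + 1 = t by omega, show t - 1 + 2 = t + 1 by omega] at h
  rcases hb with ⟨hnc, hmem⟩ | ⟨hc, hmem⟩
  · exact h.2 hnc hmem
  · exact hmem (h.1 hc)

end ActiveWalk

lemma not_dSep_of_activeWalk {A B : Set V} (hAB : Disjoint A B) (ha : a ∈ A) (hb : b ∈ B)
    (W : ActiveWalk G C a b) : ¬ G.dSep A B C := by
  intro hsep
  obtain ⟨W', hinj⟩ := W.exists_injOn
  have hab : a ≠ b := fun h => Set.disjoint_left.1 hAB ha (h ▸ hb)
  exact W'.not_blocked_toPath hinj hab (hsep a ha b hb _)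

lemma exists_activeWalk_of_not_dSep {A B : Set V} (h : ¬ G.dSep A B C) :
    ∃ a ∈ A, ∃ b ∈ B, ∃ W : ActiveWalk G C a b, Set.InjOn W.f (Set.Iic W.n) := by
  simp only [dSep, not_forall] at h
  obtain ⟨a, ha, b, hb, π, hπ⟩ := h
  exact ⟨a, ha, b, hb, .ofPath π hπ, ActiveWalk.injOn_ofPath π hπ⟩

lemma VConfig.symm (h : G.VConfig i k j) : G.VConfig j k i :=
  ⟨h.1.symm, h.2.2.1, h.2.1, h.2.2.2.2.1, h.2.2.2.1, fun h' => h.2.2.2.2.2 h'.symm⟩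

lemma IsCollider.symm (h : G.IsCollider i k j) : G.IsCollider j k i :=
  ⟨h.1.symm, h.2.2, h.2.1⟩

lemma VConfig.of_adj_iff (hsk : ∀ u v, G₁.Adj u v ↔ G₂.Adj u v)
    (h : G₁.VConfig i k j) : G₂.VConfig i k j :=
  ⟨h.1, h.2.1, h.2.2.1, (hsk i k).1 h.2.2.2.1, (hsk j k).1 h.2.2.2.2.1,
    fun h' => h.2.2.2.2.2 ((hsk i j).2 h')⟩

/-- Read an active walk backwards from `j`: an edge into `j` makes a parent of `j` a
non-collider in the conditioning set, and an edge out of `j` makes `j`, by `mem_or_transGen`,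
an ancestor of `i` or of one of its own parents. -/
lemma dSep_parents_s3 (hij : i ≠ j) (hna : ¬ G.Adj i j) (hji : ¬ TransGen G.Edge j i) :
    G.dSep {i} {j} {p | G.Edge p j} := by
  by_contra hsep
  obtain ⟨a, rfl, b, rfl, W, -⟩ := exists_activeWalk_of_not_dSep hsep
  let R := W.reverse
  have hn : 2 ≤ R.n := by
    have h0 : R.n ≠ 0 := fun h => hij ((h ▸ R.last).symm.trans R.first)
    have h1 : R.n ≠ 1 := fun h => by
      have ha := R.adj 0 (by omega)
      rw [zero_add, ← h, R.first, R.last] at ha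
      exact hna ha.symm
    omega
  rcases R.adj 0 (by omega) with h | h
  · rcases R.mem_or_transGen (m := R.n) (by omega) le_rfl h with hmem | htr
    · rw [R.first, mem_union_ancestors_iff] at hmem
      rcases hmem with hj | ⟨c, hc, hjc⟩
      · exact G.acyclic _ (.single hj)
      · exact G.acyclic _ (hjc.tail hc)
    · rw [R.first, R.last] at htr
      exact hji htr
  · refine (R.active 0 (by omega)).2 (fun hc => edge_asymm_s3 h hc.1) ?_
    rw [R.first] at h
    exact h

/-- The parents of `j` d-separate `i` from `j` in `G₁` but not in `G₂`, where `i ∼ k ∼ j` is an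
active non-collider. -/
lemma IsCollider.of_markovEquiv (hsk : ∀ u v, G₁.Adj u v ↔ G₂.Adj u v)
    (hme : G₁.MarkovEquiv G₂) (h : G₁.IsCollider i k j) : G₂.IsCollider i k j := by
  wlog hji : ¬ TransGen G₁.Edge j i generalizing i j
  · exact (this h.symm fun hij => G₁.acyclic j ((not_not.1 hji).trans hij)).symm
  obtain ⟨hvc, hik, hjk⟩ := h
  refine ⟨hvc.of_adj_iff hsk, not_not.1 fun hc => ?_⟩
  have hiC : i ∉ {p | G₁.Edge p j} := fun h => hvc.2.2.2.2.2 (.inl h)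
  have hjC : j ∉ {p | G₁.Edge p j} := fun h => G₁.acyclic j (.single h)
  have hAB : Disjoint ({i} : Set V) {j} := Set.disjoint_singleton.2 hvc.1
  have hsep := (hme _ _ _ hAB (Set.disjoint_singleton_left.2 hiC)
    (Set.disjoint_singleton_left.2 hjC)).1 (dSep_parents_s3 hvc.1 hvc.2.2.2.2.2 hji)
  refine not_dSep_of_activeWalk hAB rfl rfl
    ⟨2, fun t => if t = 0 then i else if t = 1 then k else j, rfl, rfl, fun t ht => ?_,
      fun t ht => ?_⟩ hsep
  · interval_cases t
    · exact (hsk i k).1 hvc.2.2.2.1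
    · exact ((hsk j k).1 hvc.2.2.2.2.1).symm
  · obtain rfl : t = 0 := by omega
    exact ⟨fun h => absurd h hc, fun _ h => edge_asymm_s3 hjk h⟩

def CoveredEdge (G : DAG V) (x y : V) : Prop :=
  G.Edge x y ∧ ∀ z, z ≠ x → (G.Edge z y ↔ G.Edge z x)

namespace CoveredEdge

lemma not_transGen_avoiding (hcov : G.CoveredEdge x y) :
    ¬ TransGen (fun u v => G.Edge u v ∧ s(u, v) ≠ s(x, y)) x y := by
  intro h
  obtain ⟨p, hxp, hp, hpy⟩ := TransGen.tail'_iff.1 h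
  have hpx : p ≠ x := by
    rintro rfl
    exact hpy rfl
  exact G.acyclic x (.tail' (ReflTransGen.mono (fun _ _ h => h.1) _ _ hxp) ((hcov.2 p hpx).1 hp))

lemma transGen_reverseEdge_cases (hcov : G.CoveredEdge x y) {a b : V}
    (h : TransGen (fun u v => (G.Edge u v ∧ s(u, v) ≠ s(x, y)) ∨ (u = y ∧ v = x)) a b) :
    TransGen (fun u v => G.Edge u v ∧ s(u, v) ≠ s(x, y)) a b ∨
      (ReflTransGen (fun u v => G.Edge u v ∧ s(u, v) ≠ s(x, y)) a y ∧
        ReflTransGen (fun u v => G.Edge u v ∧ s(u, v) ≠ s(x, y)) x b) := by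
  induction h using TransGen.head_induction_on with
  | single h =>
    rcases h with h | ⟨rfl, rfl⟩
    · exact .inl (.single h)
    · exact .inr ⟨.refl, .refl⟩
  | head h _ ih =>
    rcases h with h | ⟨rfl, rfl⟩
    · rcases ih with ih | ih
      · exact .inl (ih.head h)
      · exact .inr ⟨ih.1.head h, ih.2⟩
    · rcases ih with ih | ih
      · exact .inr ⟨.refl, ih.to_reflTransGen⟩
      · exact .inr ⟨.refl, ih.2⟩

end CoveredEdge

def reverseEdge (G : DAG V) (hcov : G.CoveredEdge x y) : DAG V where
  Edge u v := (G.Edge u v ∧ s(u, v) ≠ s(x, y)) ∨ (u = y ∧ v = x)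
  acyclic v h := by
    rcases hcov.transGen_reverseEdge_cases h with h | ⟨hvy, hxv⟩
    · exact G.acyclic v (TransGen.mono (fun _ _ h => h.1) _ _ h)
    · rcases reflTransGen_iff_eq_or_transGen.1 (hxv.trans hvy) with hyx | hxy
      · exact ne_of_edge hcov.1 hyx.symm
      · exact hcov.not_transGen_avoiding hxy

section Reverse

variable (hcov : G.CoveredEdge x y)

lemma reverseEdge_edge_iff (h : s(u, v) ≠ s(x, y)) :
    (G.reverseEdge hcov).Edge u v ↔ G.Edge u v := by
  refine ⟨?_, fun he => .inl ⟨he, h⟩⟩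
  rintro (⟨he, -⟩ | ⟨rfl, rfl⟩)
  · exact he
  · exact absurd Sym2.eq_swap h

lemma sym2_ne_of_edge (hcov : G.CoveredEdge x y) (h : G.Edge u v) (hne : ¬ (u = x ∧ v = y)) :
    s(u, v) ≠ s(x, y) := by
  rw [Ne, Sym2.eq_iff]
  rintro (⟨rfl, rfl⟩ | ⟨rfl, rfl⟩)
  · exact hne ⟨rfl, rfl⟩
  · exact edge_asymm_s3 hcov.1 h

lemma reverseEdge_edge_yx : (G.reverseEdge hcov).Edge y x := .inr ⟨rfl, rfl⟩

lemma not_reverseEdge_edge_xy : ¬ (G.reverseEdge hcov).Edge x y := by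
  rintro (⟨-, h⟩ | ⟨rfl, -⟩)
  · exact h rfl
  · exact ne_of_edge hcov.1 rfl

lemma adj_reverseEdge : (G.reverseEdge hcov).Adj u v ↔ G.Adj u v := by
  by_cases h : s(u, v) = s(x, y)
  · rcases Sym2.eq_iff.1 h with ⟨rfl, rfl⟩ | ⟨rfl, rfl⟩
    · exact iff_of_true (.inr (reverseEdge_edge_yx hcov)) (.inl hcov.1)
    · exact iff_of_true (.inl (reverseEdge_edge_yx hcov)) (.inr hcov.1)
  · have h' : s(v, u) ≠ s(x, y) := by rwa [Sym2.eq_swap]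
    simp only [Adj, reverseEdge_edge_iff hcov h, reverseEdge_edge_iff hcov h']

lemma CoveredEdge.reverse : (G.reverseEdge hcov).CoveredEdge y x := by
  refine ⟨reverseEdge_edge_yx hcov, fun z hzy => ?_⟩
  by_cases hzx : z = x
  · subst hzx
    exact iff_of_false (fun h => G.acyclic z (.single (h.elim (·.1) fun h => absurd h.1 hzy)))
      (not_reverseEdge_edge_xy hcov)
  · rw [reverseEdge_edge_iff hcov (by simp [hzx, hzy]),
      reverseEdge_edge_iff hcov (by simp [hzx, hzy])]
    exact (hcov.2 z hzx).symm

lemma reverseEdge_reverseEdge : (G.reverseEdge hcov).reverseEdge hcov.reverse = G := by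
  ext u v
  by_cases h : s(u, v) = s(x, y)
  · rcases Sym2.eq_iff.1 h with ⟨rfl, rfl⟩ | ⟨rfl, rfl⟩
    · exact iff_of_true (.inr ⟨rfl, rfl⟩) hcov.1
    · exact iff_of_false (not_reverseEdge_edge_xy hcov.reverse) (edge_asymm_s3 hcov.1)
  · rw [reverseEdge_edge_iff _ (by rw [@Sym2.eq_swap _ y]; exact h),
      reverseEdge_edge_iff hcov h]

lemma sym2_ne_of_isCollider (hcov : G.CoveredEdge x y) (h : G.IsCollider i k j) :
    s(i, k) ≠ s(x, y) := by
  refine sym2_ne_of_edge hcov h.2.1 ?_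
  rintro ⟨rfl, rfl⟩
  exact h.1.2.2.2.2.2 (.inr ((hcov.2 j h.1.1.symm).1 h.2.2))

lemma IsCollider.reverseEdge (h : G.IsCollider i k j) :
    (G.reverseEdge hcov).IsCollider i k j :=
  ⟨h.1.of_adj_iff fun _ _ => (adj_reverseEdge hcov).symm,
    (reverseEdge_edge_iff hcov (sym2_ne_of_isCollider hcov h)).2 h.2.1,
    (reverseEdge_edge_iff hcov (sym2_ne_of_isCollider hcov h.symm)).2 h.2.2⟩

lemma reverseEdge_isCollider_iff :
    (G.reverseEdge hcov).IsCollider i k j ↔ G.IsCollider i k j :=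
  ⟨fun h => reverseEdge_reverseEdge hcov ▸ h.reverseEdge hcov.reverse, (·.reverseEdge hcov)⟩

/-- A directed path through `x → y` that does not start at `x` enters `x` from a parent of `x`,
which is also a parent of `y`. -/
lemma transGen_reverseEdge {c : V} (h : TransGen G.Edge u c) :
    TransGen (G.reverseEdge hcov).Edge u c ∨
      (u = x ∧ ReflTransGen (G.reverseEdge hcov).Edge y c) := by
  induction h using TransGen.head_induction_on with
  | single h =>
    rename_i u
    by_cases hu : u = x ∧ c = y
    · obtain ⟨rfl, rfl⟩ := hu
      exact .inr ⟨rfl, .refl⟩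
    · exact .inl (.single ((reverseEdge_edge_iff hcov (sym2_ne_of_edge hcov h hu)).2 h))
  | head h _ ih =>
    rename_i u d _
    by_cases hu : u = x ∧ d = y
    · obtain ⟨rfl, rfl⟩ := hu
      refine .inr ⟨rfl, ih.elim TransGen.to_reflTransGen fun h => ?_⟩
      exact absurd h.1 (ne_of_edge hcov.1).symm
    have e := (reverseEdge_edge_iff hcov (sym2_ne_of_edge hcov h hu)).2 h
    rcases ih with ih | ⟨hdx, ih⟩
    · exact .inl (ih.head e)
    · rw [hdx] at h
      have hux : u ≠ x := ne_of_edge h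
      have huy := (hcov.2 u hux).2 h
      refine .inl (.head' ((reverseEdge_edge_iff hcov ?_).2 huy) ih)
      exact sym2_ne_of_edge hcov huy fun h => hux h.1

lemma mem_union_ancestors_reverseEdge (h : u ∈ C ∪ G.ancestors C) :
    u ∈ C ∪ (G.reverseEdge hcov).ancestors C ∨
      (u = x ∧ y ∈ C ∪ (G.reverseEdge hcov).ancestors C) := by
  rw [mem_union_ancestors_iff] at h
  rcases h with h | ⟨c, hc, huc⟩
  · exact .inl (.inl h)
  rcases transGen_reverseEdge hcov huc with h | ⟨rfl, h⟩
  · exact .inl (mem_union_ancestors_iff.2 (.inr ⟨c, hc, h⟩))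
  · rcases reflTransGen_iff_eq_or_transGen.1 h with rfl | h
    · exact .inr ⟨rfl, .inl hc⟩
    · exact .inr ⟨rfl, mem_union_ancestors_iff.2 (.inr ⟨c, hc, h⟩)⟩

end Reverse

lemma edge_of_reverseEdge_edge (hcov : G.CoveredEdge x y) (h : (G.reverseEdge hcov).Edge u v)
    (hu : u ≠ y) : G.Edge u v :=
  h.elim (·.1) fun h => absurd h.1 hu

lemma sym2_ne_of_ne (hx : u ≠ x) (hy : u ≠ y) : s(u, v) ≠ s(x, y) := by
  rw [Ne, Sym2.eq_iff]
  tauto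

lemma ActiveTriple.reverseEdge (hcov : G.CoveredEdge x y) (h : G.ActiveTriple C u v w)
    (huv : s(u, v) ≠ s(x, y)) (hvw : s(v, w) ≠ s(x, y)) (hv : v ≠ x) :
    (G.reverseEdge hcov).ActiveTriple C u v w :=
  h.transfer (reverseEdge_edge_iff hcov huv) (reverseEdge_edge_iff hcov (by rwa [Sym2.eq_swap]))
    fun _ _ hm => (mem_union_ancestors_reverseEdge hcov hm).resolve_right fun h => hv h.1

/-- Removing the vertex `f (k + 1)` from a walk. -/
lemma nonempty_activeWalk_of_skip (f : ℕ → V) {n k : ℕ} (hkn : k + 1 < n)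
    (hadj : ∀ t < n, t ≠ k → t ≠ k + 1 → H.Adj (f t) (f (t + 1)))
    (hskip : H.Adj (f k) (f (k + 2)))
    (hact : ∀ t, t + 2 ≤ n → t + 2 ≤ k ∨ k + 2 ≤ t →
      H.ActiveTriple C (f t) (f (t + 1)) (f (t + 2)))
    (hleft : 0 < k → H.ActiveTriple C (f (k - 1)) (f k) (f (k + 2)))
    (hright : k + 3 ≤ n → H.ActiveTriple C (f k) (f (k + 2)) (f (k + 3)))
    (h0 : f 0 = a) (hn : f n = b) : Nonempty (ActiveWalk H C a b) := by
  let g : ℕ → V := fun i => if i ≤ k then f i else f (i + 1)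
  have hg_le : ∀ i ≤ k, g i = f i := fun i hi => if_pos hi
  have hg_gt : ∀ i, k < i → g i = f (i + 1) := fun i hi => if_neg (by omega)
  refine ⟨⟨n - 1, g, (hg_le 0 (Nat.zero_le _)).trans h0, ?_, fun r hr => ?_, fun r hr => ?_⟩⟩
  · rw [hg_gt _ (by omega), Nat.sub_add_cancel (by omega), hn]
  · rcases lt_trichotomy r k with h | rfl | h
    · rw [hg_le r h.le, hg_le (r + 1) h]
      exact hadj r (by omega) h.ne (by omega)
    · rw [hg_le r le_rfl, hg_gt (r + 1) (by omega)]
      exact hskip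
    · rw [hg_gt r h, hg_gt (r + 1) (by omega)]
      exact hadj (r + 1) (by omega) (by omega) (by omega)
  · rcases lt_trichotomy (r + 1) k with h | h | h
    · rw [hg_le r (by omega), hg_le (r + 1) (by omega), hg_le (r + 2) (by omega)]
      exact hact r (by omega) (.inl (by omega))
    · rw [hg_le r (by omega), hg_le (r + 1) (by omega), hg_gt (r + 2) (by omega)]
      convert hleft (by omega) using 2 <;> omega
    rcases (Nat.le_of_lt_succ h).eq_or_lt with h | h
    · rw [hg_le r (by omega), hg_gt (r + 1) (by omega), hg_gt (r + 2) (by omega)]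
      convert hright (by omega) using 2 <;> omega
    · rw [hg_gt r (by omega), hg_gt (r + 1) (by omega), hg_gt (r + 2) (by omega)]
      exact hact (r + 1) (by omega) (.inr (by omega))

namespace ActiveWalk

section Traverse

variable (hcov : G.CoveredEdge x y) {W : ActiveWalk G C a b} {t₀ : ℕ}

lemma sym2_ne_of_traverse (hinj : Set.InjOn W.f (Set.Iic W.n)) (ht₀ : t₀ < W.n)
    (hx : W.f t₀ = x) (hy : W.f (t₀ + 1) = y) {t : ℕ} (ht : t < W.n) (hne : t ≠ t₀) :
    s(W.f t, W.f (t + 1)) ≠ s(x, y) := by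
  rw [Ne, Sym2.eq_iff]
  rintro (⟨h, -⟩ | ⟨h₁, h₂⟩)
  · exact hne (hinj (show t ≤ W.n by omega) (show t₀ ≤ W.n by omega) (h.trans hx.symm))
  · have e₁ := hinj (show t ≤ W.n by omega) (show t₀ + 1 ≤ W.n by omega) (h₁.trans hy.symm)
    have e₂ := hinj (show t + 1 ≤ W.n by omega) (show t₀ ≤ W.n by omega) (h₂.trans hx.symm)
    omega

lemma activeTriple_reverseEdge_of_traverse (hinj : Set.InjOn W.f (Set.Iic W.n))
    (ht₀ : t₀ < W.n) (hx : W.f t₀ = x) (hy : W.f (t₀ + 1) = y) {t : ℕ} (ht : t + 2 ≤ W.n)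
    (h₁ : t ≠ t₀) (h₂ : t + 1 ≠ t₀) :
    (G.reverseEdge hcov).ActiveTriple C (W.f t) (W.f (t + 1)) (W.f (t + 2)) :=
  (W.active t ht).reverseEdge hcov (sym2_ne_of_traverse hinj ht₀ hx hy (by omega) h₁)
    (sym2_ne_of_traverse hinj ht₀ hx hy (by omega) h₂)
    fun h => h₂ (hinj (show t + 1 ≤ W.n by omega) (show t₀ ≤ W.n by omega) (h.trans hx.symm))

/-- A walk `u → x → y` is shortcut to `u → y`. -/
lemma nonempty_reverseEdge_of_edge_left (hinj : Set.InjOn W.f (Set.Iic W.n)) {k : ℕ}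
    (hk : k + 2 ≤ W.n) (hx : W.f (k + 1) = x) (hy : W.f (k + 2) = y) (hux : G.Edge (W.f k) x) :
    Nonempty (ActiveWalk (G.reverseEdge hcov) C a b) := by
  have hux' : W.f k ≠ x := ne_of_edge hux
  have huy : G.Edge (W.f k) y := (hcov.2 _ hux').2 hux
  have huy' : (G.reverseEdge hcov).Edge (W.f k) y :=
    (reverseEdge_edge_iff hcov (sym2_ne_of_edge hcov huy fun h => hux' h.1)).2 huy
  refine nonempty_activeWalk_of_skip W.f (k := k) (by omega)
    (fun t ht _ _ => (adj_reverseEdge hcov).2 (W.adj t ht)) (.inl (hy ▸ huy'))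
    (fun t ht h => activeTriple_reverseEdge_of_traverse hcov hinj (by omega) hx hy ht
      (by omega) (by omega)) (fun hk0 => ?_) (fun hk3 => ?_) W.first W.last
  · have h := W.active (k - 1) (by omega)
    rw [Nat.sub_add_cancel hk0, show k - 1 + 2 = k + 1 by omega, hx] at h
    rw [hy]
    exact h.of_not_collider (fun h => edge_asymm_s3 hux h.2) fun h => edge_asymm_s3 huy' h.2
  · have h := W.active (k + 1) (by omega)
    rw [hx, hy] at h
    rw [hy]
    refine h.transfer (iff_of_true huy' hcov.1) (reverseEdge_edge_iff hcov (sym2_ne_of_ne ?_ ?_))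
      fun _ _ hm => (mem_union_ancestors_reverseEdge hcov hm).resolve_right
        fun h => ne_of_edge hcov.1 h.1.symm
    · exact hx ▸ ne_of_injOn hinj hk3 (by omega) (by omega)
    · exact hy ▸ ne_of_injOn hinj hk3 hk (by omega)

/-- A walk `x → y ← w` with `y ∈ C` is shortcut to `x ← w`. -/
lemma nonempty_reverseEdge_of_edge_right (hinj : Set.InjOn W.f (Set.Iic W.n)) {k : ℕ}
    (hk : k + 2 ≤ W.n) (hx : W.f k = x) (hy : W.f (k + 1) = y)
    (hux : 0 < k → ¬ G.Edge (W.f (k - 1)) x) (hwy : G.Edge (W.f (k + 2)) y) :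
    Nonempty (ActiveWalk (G.reverseEdge hcov) C a b) := by
  have hwx' : W.f (k + 2) ≠ x := hx ▸ ne_of_injOn hinj hk (by omega) (by omega)
  have hwx : G.Edge (W.f (k + 2)) x := (hcov.2 _ hwx').1 hwy
  have hxy : x ≠ y := ne_of_edge hcov.1
  refine nonempty_activeWalk_of_skip W.f (k := k) (by omega)
    (fun t ht _ _ => (adj_reverseEdge hcov).2 (W.adj t ht))
    (.inr (hx ▸ (reverseEdge_edge_iff hcov (sym2_ne_of_edge hcov hwx fun h => hxy h.2)).2 hwx))
    (fun t ht h => activeTriple_reverseEdge_of_traverse hcov hinj (by omega) hx hy ht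
      (by omega) (by omega)) (fun hk0 => ?_) (fun hk3 => ?_) W.first W.last
  · have h := W.active (k - 1) (by omega)
    rw [Nat.sub_add_cancel hk0, show k - 1 + 2 = k + 1 by omega, hx, hy] at h
    rw [hx]
    refine h.of_not_collider (fun h => edge_asymm_s3 hcov.1 h.2) fun h => hux hk0 ?_
    refine edge_of_reverseEdge_edge hcov h.1 ?_
    exact hy ▸ ne_of_injOn hinj (by omega) (by omega) (by omega)
  · have h := W.active (k + 1) (by omega)
    rw [hy] at h
    rw [hx]
    exact h.of_not_collider (fun h => edge_asymm_s3 hwy h.1)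
      fun h => edge_asymm_s3 hwx (edge_of_reverseEdge_edge hcov h.1 hxy)

/-- If neither shortcut applies, the walk through `x → y` itself stays active. -/
lemma nonempty_reverseEdge_of_traverse_of_not_edge (hinj : Set.InjOn W.f (Set.Iic W.n))
    (ht₀ : t₀ < W.n) (hx : W.f t₀ = x) (hy : W.f (t₀ + 1) = y)
    (hux : 0 < t₀ → ¬ G.Edge (W.f (t₀ - 1)) x)
    (hwy : t₀ + 2 ≤ W.n → y ∈ C → ¬ G.Edge (W.f (t₀ + 2)) y) :
    Nonempty (ActiveWalk (G.reverseEdge hcov) C a b) := by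
  refine ⟨⟨W.n, W.f, W.first, W.last, fun t ht => (adj_reverseEdge hcov).2 (W.adj t ht),
    fun t ht => ?_⟩⟩
  have h := W.active t ht
  by_cases h₁ : t + 1 = t₀
  · subst h₁
    rw [hx, show t + 2 = t + 1 + 1 by omega, hy] at h ⊢
    refine h.of_not_collider (fun h => edge_asymm_s3 hcov.1 h.2) fun h => hux (by omega) ?_
    refine edge_of_reverseEdge_edge hcov h.1 ?_
    exact hy ▸ ne_of_injOn hinj (by omega) (by omega) (by omega)
  by_cases h₂ : t = t₀
  · subst h₂
    rw [hx, hy] at h ⊢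
    exact ⟨fun h => absurd h.1 (not_reverseEdge_edge_xy hcov),
      fun _ hyC => hwy ht hyC (h.edge_of_mem hyC).2⟩
  exact activeTriple_reverseEdge_of_traverse hcov hinj ht₀ hx hy ht h₂ h₁

lemma nonempty_reverseEdge_of_traverse (hinj : Set.InjOn W.f (Set.Iic W.n))
    (ht₀ : t₀ < W.n) (hx : W.f t₀ = x) (hy : W.f (t₀ + 1) = y) :
    Nonempty (ActiveWalk (G.reverseEdge hcov) C a b) := by
  by_cases hux : 0 < t₀ ∧ G.Edge (W.f (t₀ - 1)) x
  · obtain ⟨k, rfl⟩ : ∃ k, t₀ = k + 1 := ⟨t₀ - 1, by omega⟩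
    exact nonempty_reverseEdge_of_edge_left hcov hinj (by omega) hx hy hux.2
  by_cases hwy : t₀ + 2 ≤ W.n ∧ y ∈ C ∧ G.Edge (W.f (t₀ + 2)) y
  · exact nonempty_reverseEdge_of_edge_right hcov hinj hwy.1 hx hy
      (fun h h' => hux ⟨h, h'⟩) hwy.2.2
  exact nonempty_reverseEdge_of_traverse_of_not_edge hcov hinj ht₀ hx hy (fun h h' => hux ⟨h, h'⟩)
    fun h h' h'' => hwy ⟨h, h', h''⟩

end Traverse

section NoTraverse

variable (hcov : G.CoveredEdge x y) {W : ActiveWalk G C a b}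

/-- A collider `u → x ← w` is replaced by the collider `u → y ← w`. -/
lemma nonempty_reverseEdge_of_collider (hinj : Set.InjOn W.f (Set.Iic W.n))
    (hno : ∀ t < W.n, s(W.f t, W.f (t + 1)) ≠ s(x, y)) {k : ℕ} (hk : k + 2 ≤ W.n)
    (hx : W.f (k + 1) = x) (hux : G.Edge (W.f k) x) (hwx : G.Edge (W.f (k + 2)) x)
    (hy : y ∈ C ∪ (G.reverseEdge hcov).ancestors C) :
    Nonempty (ActiveWalk (G.reverseEdge hcov) C a b) := by
  have hpar : ∀ {u}, G.Edge u x → (G.reverseEdge hcov).Edge u y := fun {u} h =>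
    (reverseEdge_edge_iff hcov (sym2_ne_of_ne (ne_of_edge h)
      fun h' => edge_asymm_s3 hcov.1 (h' ▸ h))).2 ((hcov.2 u (ne_of_edge h)).2 h)
  have huy := hpar hux
  have hwy := hpar hwx
  let g := Function.update W.f (k + 1) y
  have hg : ∀ i, i ≠ k + 1 → g i = W.f i := fun i hi => Function.update_of_ne hi _ _
  have hgk : g (k + 1) = y := Function.update_self _ _ _
  refine ⟨⟨W.n, g, (hg 0 (by omega)).trans W.first, (hg W.n (by omega)).trans W.last,
    fun t ht => ?_, fun t ht => ?_⟩⟩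
  · by_cases h₁ : t = k
    · subst h₁
      rw [hg t (by omega), hgk]
      exact .inl huy
    by_cases h₂ : t = k + 1
    · subst h₂
      rw [hgk, hg (k + 1 + 1) (by omega)]
      exact .inr hwy
    rw [hg t h₂, hg (t + 1) (by omega)]
    exact (adj_reverseEdge hcov).2 (W.adj t ht)
  · by_cases h₁ : t = k
    · subst h₁
      rw [hg t (by omega), hgk, hg (t + 2) (by omega)]
      exact ⟨fun _ => hy, fun h => absurd ⟨huy, hwy⟩ h⟩
    by_cases h₂ : t + 1 = k
    · subst h₂
      have h := W.active t ht
      rw [hx] at h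
      rw [hg t (by omega), hg (t + 1) (by omega), show t + 2 = t + 1 + 1 by omega, hgk]
      exact h.of_not_collider (fun h => edge_asymm_s3 hux h.2) fun h => edge_asymm_s3 huy h.2
    by_cases h₃ : t = k + 1
    · subst h₃
      have h := W.active (k + 1) ht
      rw [hx] at h
      rw [hgk, hg (k + 1 + 1) (by omega), hg (k + 1 + 2) (by omega)]
      exact h.of_not_collider (fun h => edge_asymm_s3 hwx h.1) fun h => edge_asymm_s3 hwy h.1
    rw [hg t (by omega), hg (t + 1) (by omega), hg (t + 2) (by omega)]
    exact (W.active t ht).reverseEdge hcov (hno t (by omega)) (hno (t + 1) (by omega))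
      (hx ▸ ne_of_injOn hinj (by omega) (by omega) (by omega))

lemma nonempty_reverseEdge_of_forall_ne (hinj : Set.InjOn W.f (Set.Iic W.n))
    (hno : ∀ t < W.n, s(W.f t, W.f (t + 1)) ≠ s(x, y)) :
    Nonempty (ActiveWalk (G.reverseEdge hcov) C a b) := by
  by_cases hcol : ∃ k, k + 2 ≤ W.n ∧ W.f (k + 1) = x ∧ G.Edge (W.f k) x ∧
      G.Edge (W.f (k + 2)) x ∧ x ∉ C ∪ (G.reverseEdge hcov).ancestors C
  · obtain ⟨k, hk, hx, hux, hwx, hxC⟩ := hcol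
    have hxC' := (W.active k hk).1 ⟨hx ▸ hux, hx ▸ hwx⟩
    rw [hx] at hxC'
    refine nonempty_reverseEdge_of_collider hcov hinj hno hk hx hux hwx ?_
    exact ((mem_union_ancestors_reverseEdge hcov hxC').resolve_left hxC).2
  refine ⟨⟨W.n, W.f, W.first, W.last, fun t ht => (adj_reverseEdge hcov).2 (W.adj t ht),
    fun t ht => ?_⟩⟩
  refine (W.active t ht).transfer (reverseEdge_edge_iff hcov (hno t (by omega)))
    (reverseEdge_edge_iff hcov (by rw [Sym2.eq_swap]; exact hno (t + 1) (by omega)))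
    fun hu hw hm => ?_
  by_contra hn
  obtain ⟨hx, -⟩ := (mem_union_ancestors_reverseEdge hcov hm).resolve_left hn
  exact hcol ⟨t, ht, hx, hx ▸ hu, hx ▸ hw, hx ▸ hn⟩

end NoTraverse

lemma nonempty_reverseEdge (hcov : G.CoveredEdge x y) (W : ActiveWalk G C a b)
    (hinj : Set.InjOn W.f (Set.Iic W.n)) : Nonempty (ActiveWalk (G.reverseEdge hcov) C a b) := by
  by_cases htr : ∃ t < W.n, s(W.f t, W.f (t + 1)) = s(x, y)
  · obtain ⟨t, ht, he⟩ := htr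
    rcases Sym2.eq_iff.1 he with ⟨hx, hy⟩ | ⟨hy, hx⟩
    · exact nonempty_reverseEdge_of_traverse hcov hinj ht hx hy
    obtain ⟨R⟩ := nonempty_reverseEdge_of_traverse hcov (W := W.reverse) (injOn_reverse hinj)
      (t₀ := W.n - (t + 1)) (by simp only [reverse]; omega)
      (by simp only [reverse]; rwa [show W.n - (W.n - (t + 1)) = t + 1 by omega])
      (by simp only [reverse]; rwa [show W.n - (W.n - (t + 1) + 1) = t by omega])
    exact ⟨R.reverse⟩
  push Not at htr
  exact nonempty_reverseEdge_of_forall_ne hcov hinj htr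

end ActiveWalk

lemma dSep_of_dSep_reverseEdge (hcov : G.CoveredEdge x y) {A B : Set V} (hAB : Disjoint A B)
    (h : (G.reverseEdge hcov).dSep A B C) : G.dSep A B C := by
  by_contra hn
  obtain ⟨a, ha, b, hb, W, hinj⟩ := exists_activeWalk_of_not_dSep hn
  obtain ⟨W'⟩ := W.nonempty_reverseEdge hcov hinj
  exact not_dSep_of_activeWalk hAB ha hb W' h

lemma markovEquiv_reverseEdge (hcov : G.CoveredEdge x y) : G.MarkovEquiv (G.reverseEdge hcov) :=
  fun _ _ _ hAB _ _ => ⟨fun h => dSep_of_dSep_reverseEdge hcov.reverse hAB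
    ((reverseEdge_reverseEdge hcov).symm ▸ h), dSep_of_dSep_reverseEdge hcov hAB⟩

lemma wellFounded_transGen [Finite V] (G : DAG V) : WellFounded (TransGen G.Edge) :=
  haveI : IsTrans V (TransGen G.Edge) := ⟨fun _ _ _ => TransGen.trans⟩
  haveI : Std.Irrefl (TransGen G.Edge) := ⟨G.acyclic⟩
  Finite.wellFounded_of_trans_of_irrefl _

lemma wellFounded_transGen_swap [Finite V] (G : DAG V) :
    WellFounded (Function.swap (TransGen G.Edge)) :=
  haveI : IsTrans V (Function.swap (TransGen G.Edge)) := ⟨fun _ _ _ h h' => h'.trans h⟩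
  haveI : Std.Irrefl (Function.swap (TransGen G.Edge)) := ⟨G.acyclic⟩
  Finite.wellFounded_of_trans_of_irrefl _

/-- If `G₂` reverses some edge of `G₁`, take `y` minimal among the heads of such edges and
`x` maximal among their tails into `y`: then `x → y` is covered in `G₁`. -/
lemma exists_coveredEdge [Finite V] (hsk : ∀ u v, G₁.Adj u v ↔ G₂.Adj u v)
    (hcol : ∀ i k j, G₁.IsCollider i k j ↔ G₂.IsCollider i k j)
    (h : ∃ u v, G₁.Edge u v ∧ ¬ G₂.Edge u v) : ∃ x y, G₁.CoveredEdge x y ∧ G₂.Edge y x := by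
  obtain ⟨u₀, v₀, huv⟩ := h
  obtain ⟨y, ⟨u₁, hy⟩, hymin⟩ := G₁.wellFounded_transGen.has_min
    {v | ∃ u, G₁.Edge u v ∧ ¬ G₂.Edge u v} ⟨v₀, u₀, huv⟩
  obtain ⟨x, ⟨hxy, hxy₂⟩, hxmax⟩ := G₁.wellFounded_transGen_swap.has_min
    {u | G₁.Edge u y ∧ ¬ G₂.Edge u y} ⟨u₁, hy⟩
  have hyx : G₂.Edge y x := ((hsk x y).1 (.inl hxy)).resolve_left hxy₂
  refine ⟨x, y, ⟨hxy, fun z hzx => ⟨fun hzy => ?_, fun hzx₁ => ?_⟩⟩, hyx⟩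
  · by_contra hzx₁
    by_cases hxz : G₁.Adj x z
    · replace hxz : G₁.Edge x z := hxz.resolve_right hzx₁
      rcases (hsk z y).1 (.inl hzy) with hzy₂ | hyz₂
      · refine hymin z ⟨x, hxz, fun hxz₂ => ?_⟩ (.single hzy)
        exact G₂.acyclic y (.head hyx (.head hxz₂ (.single hzy₂)))
      · exact hxmax z ⟨hzy, edge_asymm_s3 hyz₂⟩ (.single hxz)
    · have hc : G₁.IsCollider x y z :=
        ⟨⟨hzx.symm, ne_of_edge hxy, ne_of_edge hzy, .inl hxy, .inl hzy, hxz⟩, hxy, hzy⟩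
      exact hxy₂ ((hcol x y z).1 hc).2.1
  · by_contra hzy₁
    have hzy : z ≠ y := fun h => edge_asymm_s3 hxy (h ▸ hzx₁)
    have hyz : ¬ G₁.Adj z y := fun h => h.elim hzy₁ fun hyz =>
      G₁.acyclic y (.head hyz (.head hzx₁ (.single hxy)))
    by_cases hzx₂ : G₂.Edge z x
    · have hc : G₂.IsCollider z x y := ⟨⟨hzy, hzx, ne_of_edge hyx, (hsk z x).1 (.inl hzx₁),
        (hsk y x).1 (.inr hxy), fun h => hyz ((hsk z y).2 h)⟩, hzx₂, hyx⟩
      exact edge_asymm_s3 hxy ((hcol z x y).2 hc).2.2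
    · exact hymin x ⟨z, hzx₁, hzx₂⟩ (.single hxy)

/-- Verma–Pearl, by induction on the number of edges of `G₁` reversed in `G₂`. -/
theorem markovEquiv_of_adj_iff_of_isCollider_iff [Finite V]
    (hsk : ∀ u v, G₁.Adj u v ↔ G₂.Adj u v)
    (hcol : ∀ i k j, G₁.IsCollider i k j ↔ G₂.IsCollider i k j) : G₁.MarkovEquiv G₂ := by
  induction hN : {p : V × V | G₁.Edge p.1 p.2 ∧ ¬ G₂.Edge p.1 p.2}.ncard
    using Nat.strong_induction_on generalizing G₁ with
  | _ N ih =>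
    by_cases h : ∃ u v, G₁.Edge u v ∧ ¬ G₂.Edge u v
    · obtain ⟨x, y, hcov, hyx⟩ := exists_coveredEdge hsk hcol h
      refine (markovEquiv_reverseEdge hcov).trans (ih _ ?_
        (fun u v => (adj_reverseEdge hcov).trans (hsk u v))
        (fun i k j => (reverseEdge_isCollider_iff hcov).trans (hcol i k j)) rfl)
      have hsub : {p : V × V | (G₁.reverseEdge hcov).Edge p.1 p.2 ∧ ¬ G₂.Edge p.1 p.2} ⊆
          {p | G₁.Edge p.1 p.2 ∧ ¬ G₂.Edge p.1 p.2} := fun p hp =>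
        ⟨hp.1.elim (·.1) fun h => (hp.2 (by rw [h.1, h.2]; exact hyx)).elim, hp.2⟩
      rw [← hN]
      exact Set.ncard_lt_ncard ((Set.ssubset_iff_of_subset hsub).2
        ⟨(x, y), ⟨hcov.1, edge_asymm_s3 hyx⟩, fun hp => not_reverseEdge_edge_xy hcov hp.1⟩)
    · push Not at h
      obtain rfl : G₁ = G₂ := ext fun u v => ⟨h u v, fun h₂ =>
        ((hsk u v).2 (.inl h₂)).resolve_right fun h₁ => edge_asymm_s3 h₂ (h v u h₁)⟩
      exact .refl _

end DAG

section OrientationRule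

variable {V : Type*} {Ω : Type*} [MeasurableSpace Ω] [StandardBorelSpace Ω]
  {E : V → Type*} [∀ i, MeasurableSpace (E i)]
  (μ : Measure Ω) [IsFiniteMeasure μ] (X : ∀ i, Ω → E i) (hX : ∀ i, Measurable (X i))
  {G : DAG V}

lemma subset_compl_insert_iff {C : Set V} {i j k : V} :
    C ⊆ ({i, j, k} : Set V)ᶜ ↔ C ⊆ ({i, j} : Set V)ᶜ ∧ k ∉ C := by
  simp only [Set.subset_compl_iff_disjoint_right, Set.disjoint_insert_right,
    Set.disjoint_singleton_right, and_assoc]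

lemma vConfigRel_iff (hG : SkelEq μ X hX G) {i k j : V} :
    VConfigRel (SkP μ X hX) i k j ↔ G.VConfig i k j := by
  have hG' : ∀ u v, G.Adj u v ↔ SkP μ X hX u v := hG
  simp only [VConfigRel, DAG.VConfig, hG']

lemma forall_assignedCollider_iff_vOUS (hG : SkelEq μ X hX G) :
    (∀ i k j, AssignedCollider μ X hX i k j → G.IsCollider i k j) ↔ VOUS μ X hX G := by
  refine ⟨fun h i k j hnc C hC hCI => ?_, fun h i k j ⟨hvc, C, hC, hCI, hCIk⟩ => ?_⟩
  · by_contra hCIk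
    exact hnc.2 (h i k j ⟨(vConfigRel_iff μ X hX hG).2 hnc.1, C, hC, hCI, hCIk⟩).2
  · have hvc := (vConfigRel_iff μ X hX hG).1 hvc
    by_contra hc
    exact hCIk (h i k j ⟨hvc, fun he => hc ⟨hvc, he⟩⟩ C hC hCI)

lemma forall_assignedNonCollider_iff_colliderStable (hG : SkelEq μ X hX G) :
    (∀ i k j, AssignedNonCollider μ X hX i k j → G.IsNonCollider i k j) ↔
      ColliderStable μ X hX G := by
  refine ⟨fun h i k j hc => ?_, fun h i k j ⟨hvc, hk⟩ => ?_⟩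
  · by_contra hs
    refine (h i k j ⟨(vConfigRel_iff μ X hX hG).2 hc.1, fun C hC hCI => ?_⟩).2 hc.2
    by_contra hkC
    exact hs ⟨C, subset_compl_insert_iff.2 ⟨hC, hkC⟩, hCI⟩
  · have hvc := (vConfigRel_iff μ X hX hG).1 hvc
    refine ⟨hvc, fun he => ?_⟩
    obtain ⟨C, hC, hCI⟩ := h i k j ⟨hvc, he⟩
    rw [subset_compl_insert_iff] at hC
    exact hC.2 (hk C hC.1 hCI)

lemma satisfiesRule_iff :
    SatisfiesRule μ X hX G ↔ SkelEq μ X hX G ∧ VOUS μ X hX G ∧ ColliderStable μ X hX G :=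
  and_congr_right fun hG => and_congr (forall_assignedCollider_iff_vOUS μ X hX hG)
    (forall_assignedNonCollider_iff_colliderStable μ X hX hG)

end OrientationRule

variable {V : Type*} [Fintype V] {Ω : Type*} [MeasurableSpace Ω] [StandardBorelSpace Ω]
  [Nonempty Ω] {E : V → Type*} [∀ i, MeasurableSpace (E i)]
  (μ : MeasureTheory.Measure Ω) [MeasureTheory.IsProbabilityMeasure μ]
  (X : ∀ i, Ω → E i) (hX : ∀ i, Measurable (X i))

/-- Any two DAGs satisfying the V-OUS and collider-stable orientation rule wrt `P` have
exactly the same collider v-configurations, iff any two DAGs `G` with `sk(G) = sk(P)`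
such that `P` is V-OUS and collider-stable wrt `G` are Markov equivalent. -/
theorem stmt_3 :
    (∀ G₁ G₂ : DAG V, SatisfiesRule μ X hX G₁ → SatisfiesRule μ X hX G₂ →
        ∀ i k j : V, G₁.IsCollider i k j ↔ G₂.IsCollider i k j) ↔
      ModifiedVStable μ X hX := by
  simp only [satisfiesRule_iff]
  refine ⟨fun h G₁ G₂ hs₁ hv₁ hc₁ hs₂ hv₂ hc₂ => ?_,
    fun h G₁ G₂ ⟨hs₁, hv₁, hc₁⟩ ⟨hs₂, hv₂, hc₂⟩ => ?_⟩
  · exact DAG.markovEquiv_of_adj_iff_of_isCollider_iff (fun u v => (hs₁ u v).trans (hs₂ u v).symm)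
      (h G₁ G₂ ⟨hs₁, hv₁, hc₁⟩ ⟨hs₂, hv₂, hc₂⟩)
  · have hsk : ∀ u v, G₁.Adj u v ↔ G₂.Adj u v := fun u v => (hs₁ u v).trans (hs₂ u v).symm
    have hme := h G₁ G₂ hs₁ hv₁ hc₁ hs₂ hv₂ hc₂
    exact fun i k j =>
      ⟨.of_markovEquiv hsk hme, .of_markovEquiv (fun u v => (hsk u v).symm) hme.symm⟩
end

section
/- Let all X_i take values in a common measurable space, and suppose P satisfies: (1) the composition property: for all distinct i, j, k ∈ V and C ⊆ V∖{i,j,k}, {i} ⫫ {j} | C and {i} ⫫ {k} | C imply {i} ⫫ {j,k} | C; and (2) conditional exchangeability: for every non-collider v-configuration i∼k∼j in the DAG G_0, the regular conditional distribution of the triple (X_i, X_j, X_k) given the σ-algebra generated by (X_l)_{l∈V∖{i,j,k}} is almost surely invariant under permutations of the three coordinates. Then P is V-OUS with respect to G_0. -/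
open MeasureTheory ProbabilityTheory

variable {V : Type*} [Fintype V] {Ω : Type*} [MeasurableSpace Ω] [StandardBorelSpace Ω]
  [Nonempty Ω] {E : Type*} [MeasurableSpace E] [StandardBorelSpace E] [Nonempty E]
  (μ : MeasureTheory.Measure Ω) [MeasureTheory.IsProbabilityMeasure μ]
  (X : V → Ω → E) (hX : ∀ i, Measurable (X i))

/-! Swapping `X j` and `X k` leaves the conditional law of `(X i, X j, X k)` given the other
variables unchanged, so `(X_C, X i, X j)` and `(X_C, X i, X k)` have the same law. Conditional
independence depends only on the joint law, hence `{i} ⫫ {j} | C` gives `{i} ⫫ {k} | C`;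
composition yields `{i} ⫫ {j, k} | C` and weak union `{i} ⫫ {j} | C ∪ {k}`. -/

namespace MeasureTheory.Measure

variable {α β γ : Type*} {mα : MeasurableSpace α} {ν : Measure α} [MeasurableSpace β]
  [MeasurableSpace γ]

theorem map_comp_eq_of_map_eq {α' : Type*} {mα' : MeasurableSpace α'} {ν' : Measure α'}
    {Y : α → β} {Y' : α' → β} {π : β → γ} (hY : Measurable Y) (hY' : Measurable Y')
    (hπ : Measurable π) (h : ν.map Y = ν'.map Y') : ν.map (π ∘ Y) = ν'.map (π ∘ Y') := by
  rw [← map_map hπ hY, ← map_map hπ hY', h]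

theorem map_compProd_eq_map_prodMap_compProd_comap [IsFiniteMeasure ν] {ψ : α → β}
    (hψ : Measurable ψ) (η : Kernel β γ) [IsFiniteKernel η] :
    ν.map ψ ⊗ₘ η = (ν ⊗ₘ η.comap ψ hψ).map (Prod.map ψ id) := by
  refine ext_prod fun {s t} hs ht ↦ ?_
  rw [map_apply (by fun_prop) (hs.prod ht), Set.preimage_prod_map_prod, Set.preimage_id,
    compProd_apply_prod hs ht, compProd_apply_prod (hψ hs) ht,
    setLIntegral_map hs (η.measurable_coe ht) hψ]
  rfl

end MeasureTheory.Measure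

namespace ProbabilityTheory

variable {α β γ δ ε : Type*} {mα : MeasurableSpace α} {ν : Measure α} [IsFiniteMeasure ν]
  [MeasurableSpace β] [MeasurableSpace γ] [MeasurableSpace δ] [MeasurableSpace ε]

section

variable [StandardBorelSpace β] [Nonempty β]

theorem condDistrib_eq_of_map_eq {α' : Type*} {mα' : MeasurableSpace α'} {ν' : Measure α'}
    [IsFiniteMeasure ν'] {f : α → β} {k : α → δ} {f' : α' → β} {k' : α' → δ}
    (h : ν.map (fun ω ↦ (k ω, f ω)) = ν'.map (fun ω ↦ (k' ω, f' ω))) :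
    condDistrib f k ν = condDistrib f' k' ν' := by
  rw [condDistrib_def, condDistrib_def]
  congr 1

theorem map_prodMk_eq_of_condDistrib_ae_eq {f f' : α → β} {k : α → δ} (hf : Measurable f)
    (hf' : Measurable f') (h : condDistrib f k ν =ᵐ[ν.map k] condDistrib f' k ν) :
    ν.map (fun ω ↦ (k ω, f ω)) = ν.map (fun ω ↦ (k ω, f' ω)) := by
  rw [← compProd_map_condDistrib hf.aemeasurable, ← compProd_map_condDistrib hf'.aemeasurable,
    Measure.compProd_congr h]

theorem condDistrib_comp_ae_eq_of_ae_eq_comap {f : α → β} {k : α → δ} {ψ : δ → ε}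
    (hf : Measurable f) (hk : Measurable k) (hψ : Measurable ψ) {η : Kernel ε β}
    [IsFiniteKernel η] (h : condDistrib f k ν =ᵐ[ν.map k] η.comap ψ hψ) :
    condDistrib f (ψ ∘ k) ν =ᵐ[ν.map (ψ ∘ k)] η := by
  rw [condDistrib_ae_eq_iff_measure_eq_compProd _ hf.aemeasurable] at h ⊢
  rw [← Measure.map_map hψ hk, Measure.map_compProd_eq_map_prodMap_compProd_comap hψ, ← h,
    Measure.map_map (by fun_prop) (by fun_prop)]
  rfl

end

variable [StandardBorelSpace α]

theorem CondIndepFun.of_comap_le {β' γ' : Type*} [MeasurableSpace β'] [MeasurableSpace γ']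
    {f : α → β} {g : α → γ} {k : α → δ} {f' : α → β'} {g' : α → γ'} {k' : α → ε}
    (hk : Measurable k) (hk' : Measurable k')
    (hf : MeasurableSpace.comap f' inferInstance ≤ MeasurableSpace.comap f inferInstance)
    (hg : MeasurableSpace.comap g' inferInstance ≤ MeasurableSpace.comap g inferInstance)
    (hkk' : MeasurableSpace.comap k inferInstance = MeasurableSpace.comap k' inferInstance)
    (h : f ⟂ᵢ[k, hk; ν] g) : f' ⟂ᵢ[k', hk'; ν] g' := by
  rw [condIndepFun_iff_condIndep] at h ⊢
  convert condIndep_of_condIndep_of_le_right (condIndep_of_condIndep_of_le_left h hf) hg using 1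
  exact hkk'.symm

theorem CondIndepFun.of_map_eq [StandardBorelSpace β] [Nonempty β] [StandardBorelSpace γ]
    [Nonempty γ] {f f' : α → β} {g g' : α → γ} {k k' : α → δ}
    (hf : Measurable f) (hg : Measurable g) (hk : Measurable k)
    (hf' : Measurable f') (hg' : Measurable g') (hk' : Measurable k')
    (hlaw : ν.map (fun ω ↦ (k ω, f ω, g ω)) = ν.map (fun ω ↦ (k' ω, f' ω, g' ω)))
    (h : f ⟂ᵢ[k, hk; ν] g) : f' ⟂ᵢ[k', hk'; ν] g' := by
  have hT : Measurable fun ω ↦ (k ω, f ω, g ω) := by fun_prop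
  have hT' : Measurable fun ω ↦ (k' ω, f' ω, g' ω) := by fun_prop
  have hkf := condDistrib_eq_of_map_eq <| Measure.map_comp_eq_of_map_eq hT hT'
    (π := fun p : δ × β × γ ↦ (p.1, p.2.1)) (by fun_prop) hlaw
  have hkg := condDistrib_eq_of_map_eq <| Measure.map_comp_eq_of_map_eq hT hT'
    (π := fun p : δ × β × γ ↦ (p.1, p.2.2)) (by fun_prop) hlaw
  have hkk := Measure.map_comp_eq_of_map_eq hT hT' measurable_fst hlaw
  simp only [Function.comp_def] at hkf hkg hkk
  rw [condIndepFun_iff_map_prod_eq_prod_condDistrib_prod_condDistrib hf hg hk] at h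
  rw [condIndepFun_iff_map_prod_eq_prod_condDistrib_prod_condDistrib hf' hg' hk', ← hlaw, h,
    hkf, hkg, hkk]

theorem CondIndepFun.weak_union [StandardBorelSpace β] [Nonempty β] [StandardBorelSpace γ]
    [Nonempty γ] [StandardBorelSpace ε] [Nonempty ε] {f : α → β} {g : α → γ} {z : α → ε}
    {k : α → δ} (hf : Measurable f) (hg : Measurable g) (hz : Measurable z) (hk : Measurable k)
    (h : f ⟂ᵢ[k, hk; ν] fun ω ↦ (g ω, z ω)) :
    f ⟂ᵢ[fun ω ↦ (k ω, z ω), hk.prodMk hz; ν] g := by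
  -- The conditional law of `f` given `(k, g, z)` is that given `k`; since this depends on `k`
  -- only, so are the conditional laws given the coarser `((k, z), g)` and `(k, z)`.
  have hkgz := (condIndepFun_iff_condDistrib_prod_ae_eq_prodMkRight hf (hg.prodMk hz) hk).mp
    h.symm
  refine ((condIndepFun_iff_condDistrib_prod_ae_eq_prodMkRight hf hg (hk.prodMk hz)).mpr ?_).symm
  have hkzg := condDistrib_comp_ae_eq_of_ae_eq_comap
    (ψ := fun p : δ × γ × ε ↦ ((p.1, p.2.2), p.2.1))
    (η := (condDistrib f k ν).comap (fun q ↦ q.1.1) (by fun_prop)) hf (by fun_prop)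
    (by fun_prop) hkgz
  have hkz := condDistrib_comp_ae_eq_of_ae_eq_comap (ψ := fun p : δ × γ × ε ↦ (p.1, p.2.2))
    (η := (condDistrib f k ν).prodMkRight ε) hf (by fun_prop) (by fun_prop) hkgz
  have hkz' : ∀ᵐ x ∂ν.map (fun ω ↦ ((k ω, z ω), g ω)),
      condDistrib f (fun ω ↦ (k ω, z ω)) ν x.1 = condDistrib f k ν x.1.1 := by
    refine ae_of_ae_map (p := fun y ↦ condDistrib f (fun ω ↦ (k ω, z ω)) ν y =
      condDistrib f k ν y.1) measurable_fst.aemeasurable ?_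
    rw [Measure.map_map measurable_fst (by fun_prop)]
    exact hkz
  filter_upwards [hkzg, hkz'] with x hx hx'
  rw [Kernel.prodMkRight_apply, hx']
  exact hx

end ProbabilityTheory

section

variable {ι α β : Type*} {mα : MeasurableSpace α} [MeasurableSpace β]

theorem comap_restrict_singleton (Y : ι → α → β) (a : ι) :
    MeasurableSpace.comap (fun ω (l : ({a} : Set ι)) ↦ Y l ω) inferInstance =
      MeasurableSpace.comap (Y a) inferInstance := by
  refine le_antisymm (MeasurableSpace.comap_le_comap_of_eq_comp (fun x _ ↦ x) (by fun_prop) ?_)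
    (MeasurableSpace.comap_le_comap_of_eq_comp (fun v ↦ v ⟨a, rfl⟩) (by fun_prop) rfl)
  funext ω ⟨l, hl⟩
  obtain rfl : l = a := hl
  rfl

theorem comap_restrict_union_singleton (Y : ι → α → β) (C : Set ι) (b : ι) :
    MeasurableSpace.comap (fun ω (l : ↥(C ∪ {b})) ↦ Y l ω) inferInstance =
      MeasurableSpace.comap (fun ω ↦ (fun l : C ↦ Y l ω, Y b ω)) inferInstance := by
  classical
  refine le_antisymm (MeasurableSpace.comap_le_comap_of_eq_comp
    (fun p l ↦ if h : (l : ι) ∈ C then p.1 ⟨l, h⟩ else p.2) ?_ ?_)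
    (MeasurableSpace.comap_le_comap_of_eq_comp
      (fun v ↦ (fun l : C ↦ v ⟨l, .inl l.2⟩, v ⟨b, .inr rfl⟩)) (by fun_prop) rfl)
  · refine measurable_pi_lambda _ fun l ↦ ?_
    split_ifs <;> fun_prop
  · funext ω ⟨l, hl⟩
    by_cases hlC : l ∈ C
    · simp [hlC]
    · obtain rfl : l = b := hl.resolve_left hlC
      simp [hlC]

theorem map_restrict_prod_eq_of_condDistrib_swap_ae_eq [StandardBorelSpace β] [Nonempty β]
    {ν : Measure α} [IsFiniteMeasure ν] {Y : ι → α → β} (hY : ∀ i, Measurable (Y i))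
    {C D : Set ι} (hCD : C ⊆ D) (a b c : ι)
    (h : ∀ᵐ x ∂ν.map (fun ω (l : D) ↦ Y l ω),
      condDistrib (fun ω m ↦ ![Y a ω, Y b ω, Y c ω] (Equiv.swap 1 2 m)) (fun ω (l : D) ↦ Y l ω)
          ν x =
        condDistrib (fun ω ↦ ![Y a ω, Y b ω, Y c ω]) (fun ω (l : D) ↦ Y l ω) ν x) :
    ν.map (fun ω ↦ (fun l : C ↦ Y l ω, Y a ω, Y b ω)) =
      ν.map (fun ω ↦ (fun l : C ↦ Y l ω, Y a ω, Y c ω)) := by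
  have hT : ∀ σ : Equiv.Perm (Fin 3), Measurable fun ω m ↦ ![Y a ω, Y b ω, Y c ω] (σ m) := by
    intro σ
    refine measurable_pi_lambda _ fun m ↦ ?_
    generalize σ m = n
    fin_cases n <;> exact hY _
  have hYD : Measurable fun ω (l : D) ↦ Y l ω := by fun_prop
  have hlaw := map_prodMk_eq_of_condDistrib_ae_eq (hT (Equiv.swap 1 2)) (hT 1) h
  exact (Measure.map_comp_eq_of_map_eq (hYD.prodMk (hT _)) (hYD.prodMk (hT 1))
    (π := fun p : (D → β) × (Fin 3 → β) ↦ (fun l : C ↦ p.1 ⟨l, hCD l.2⟩, p.2 0, p.2 1))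
    (by fun_prop) hlaw).symm

end

open ProbabilityTheory in
/-- Composition and conditional exchangeability imply V-OUS wrt `G₀`. -/
theorem stmt_5 (G₀ : DAG V)
    (hcomp : ∀ i j k : V, i ≠ j → i ≠ k → j ≠ k → ∀ C : Set V,
      C ⊆ ({i, j, k} : Set V)ᶜ →
      CI μ X hX {i} {j} C → CI μ X hX {i} {k} C → CI μ X hX {i} {j, k} C)
    (hexch : ∀ i k j : V, G₀.IsNonCollider i k j →
      ∀ σ : Equiv.Perm (Fin 3),
        ∀ᵐ a ∂(μ.map (fun ω => fun l : (({i, j, k} : Set V)ᶜ : Set V) => X l.1 ω)),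
          condDistrib (fun ω => fun m : Fin 3 => ![X i ω, X j ω, X k ω] (σ m))
              (fun ω => fun l : (({i, j, k} : Set V)ᶜ : Set V) => X l.1 ω) μ a =
            condDistrib (fun ω => ![X i ω, X j ω, X k ω])
              (fun ω => fun l : (({i, j, k} : Set V)ᶜ : Set V) => X l.1 ω) μ a) :
    VOUS μ X hX G₀ := by
  intro i k j hnc C hC hij
  obtain ⟨hij_ne, hik_ne, hjk_ne, -⟩ := hnc.1
  have hXC : Measurable fun ω (l : C) ↦ X l ω := by fun_prop
  -- `CI` is stated for subfamilies indexed by sets; a singleton subfamily generates the same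
  -- σ-algebra as the variable itself.
  have sij : X i ⟂ᵢ[fun ω (l : C) ↦ X l ω, hXC; μ] X j :=
    CondIndepFun.of_comap_le hXC hXC (comap_restrict_singleton X i).ge
      (comap_restrict_singleton X j).ge rfl hij
  have sik : X i ⟂ᵢ[fun ω (l : C) ↦ X l ω, hXC; μ] X k :=
    CondIndepFun.of_map_eq (hX i) (hX j) hXC (hX i) (hX k) hXC
      (map_restrict_prod_eq_of_condDistrib_swap_ae_eq hX hC i j k (hexch i k j hnc _)) sij
  have cik : CI μ X hX {i} {k} C :=
    CondIndepFun.of_comap_le hXC hXC (comap_restrict_singleton X i).le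
      (comap_restrict_singleton X k).le rfl sik
  have sijk : X i ⟂ᵢ[fun ω (l : C) ↦ X l ω, hXC; μ] fun ω ↦ (X j ω, X k ω) :=
    CondIndepFun.of_comap_le hXC hXC (comap_restrict_singleton X i).ge
      (MeasurableSpace.comap_le_comap_of_eq_comp (fun v ↦ (v ⟨j, .inl rfl⟩, v ⟨k, .inr rfl⟩))
        (by fun_prop) rfl) rfl (hcomp i j k hij_ne hik_ne hjk_ne C hC hij cik)
  exact CondIndepFun.of_comap_le (hXC.prodMk (hX k)) (by fun_prop)
    (comap_restrict_singleton X i).le (comap_restrict_singleton X j).le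
    (comap_restrict_union_singleton X C k).symm
    (CondIndepFun.weak_union (hX i) (hX j) (hX k) hXC sijk)
end

section
/- Suppose all X_i, i ∈ V, take values in a common measurable space and the joint distribution of (X_i)_{i∈V} is exchangeable, i.e., invariant under every permutation of the coordinates. Then P satisfies the composition property (for all distinct i, j, k ∈ V and C ⊆ V∖{i,j,k}, {i} ⫫ {j} | C and {i} ⫫ {k} | C imply {i} ⫫ {j,k} | C) if and only if P satisfies upward stability (for all distinct i, j, k ∈ V and C ⊆ V∖{i,j,k}, {i} ⫫ {j} | C implies {i} ⫫ {j} | C∪{k}). -/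
open MeasureTheory ProbabilityTheory

/-!
Conditional independence `A ⫫ B | C` holds iff, for every event `F` of `X_A`,
`P(F | X_C, X_B) = P(F | X_C)` a.s. From this characterisation, weak union
(`A ⫫ B ∪ D | C ⟹ A ⫫ B | C ∪ D`) and contraction (`A ⫫ D | C` and `A ⫫ B | C ∪ D`
`⟹ A ⫫ B ∪ D | C`) follow by chaining conditional expectations. Upward stability together with
contraction gives composition. Conversely, conditional independence depends only on the joint law
of `(X_v)`, so exchangeability, applied to the transposition of `j` and `k`, turns `i ⫫ j | C`
into `i ⫫ k | C`; composition then gives `i ⫫ {j, k} | C`, and weak union `i ⫫ j | C ∪ {k}`.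
-/

section CondIndepSup

variable {Ω : Type*} {m m₀ m₁ m₂ m₃ : MeasurableSpace Ω} [mΩ : MeasurableSpace Ω]
  {μ : Measure Ω}

theorem setIntegral_eq_of_forall_inter (hm₁ : m₁ ≤ mΩ) (hm₂ : m₂ ≤ mΩ) {f g : Ω → ℝ}
    (hf : Integrable f μ) (hg : Integrable g μ)
    (h : ∀ s t, MeasurableSet[m₁] s → MeasurableSet[m₂] t →
      ∫ x in s ∩ t, f x ∂μ = ∫ x in s ∩ t, g x ∂μ)
    {A : Set Ω} (hA : MeasurableSet[m₁ ⊔ m₂] A) : ∫ x in A, f x ∂μ = ∫ x in A, g x ∂μ := by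
  set P := Set.image2 (· ∩ ·) {s | MeasurableSet[m₁] s} {t | MeasurableSet[m₂] t}
  have hle : m₁ ⊔ m₂ ≤ mΩ := sup_le hm₁ hm₂
  have hgen : m₁ ⊔ m₂ = MeasurableSpace.generateFrom P := by
    refine le_antisymm (sup_le (fun s hs => ?_) (fun t ht => ?_))
      (MeasurableSpace.generateFrom_le ?_)
    · exact MeasurableSpace.measurableSet_generateFrom ⟨s, hs, Set.univ, .univ, Set.inter_univ s⟩
    · exact MeasurableSpace.measurableSet_generateFrom ⟨Set.univ, .univ, t, ht, Set.univ_inter t⟩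
    · rintro _ ⟨s, hs, t, ht, rfl⟩
      exact (le_sup_left (b := m₂) s hs).inter (le_sup_right (a := m₁) t ht)
  have hpi : IsPiSystem P := by
    rintro _ ⟨s, hs, t, ht, rfl⟩ _ ⟨s', hs', t', ht', rfl⟩ _
    exact ⟨s ∩ s', hs.inter hs', t ∩ t', ht.inter ht', Set.inter_inter_inter_comm s s' t t'⟩
  have h_univ : ∫ x, f x ∂μ = ∫ x, g x ∂μ := by
    simpa using h Set.univ Set.univ .univ .univ
  induction A, hA using MeasurableSpace.induction_on_inter hgen hpi with
  | empty => simp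
  | basic _ hu =>
    obtain ⟨s, hs, t, ht, rfl⟩ := hu
    exact h s t hs ht
  | compl A hA ih =>
    rw [setIntegral_compl (hle A hA) hf, setIntegral_compl (hle A hA) hg, ih, h_univ]
  | iUnion A hdisj hA ih =>
    rw [integral_iUnion (fun n => hle _ (hA n)) hdisj hf.integrableOn,
      integral_iUnion (fun n => hle _ (hA n)) hdisj hg.integrableOn]
    exact tsum_congr ih

variable [IsFiniteMeasure μ]

theorem condExp_indicator_mul_ae_eq {g : Ω → ℝ} (hg : StronglyMeasurable[m] g)
    (hgi : Integrable g μ) {t : Set Ω} (ht : MeasurableSet t) :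
    μ[t.indicator g | m] =ᵐ[μ] g * μ⟦t | m⟧ := by
  have hprod : t.indicator g = g * t.indicator fun _ => (1 : ℝ) := by
    ext ω; by_cases hω : ω ∈ t <;> simp [hω]
  rw [hprod]
  refine condExp_mul_of_stronglyMeasurable_left hg ?_ ((integrable_const 1).indicator ht)
  rw [← hprod]
  exact hgi.indicator ht

variable [StandardBorelSpace Ω]

theorem condExp_sup_ae_eq_of_condIndep (hm₀ : m₀ ≤ mΩ) (hm₁ : m₁ ≤ mΩ) (hm₂ : m₂ ≤ mΩ)
    (h : CondIndep m₀ m₁ m₂ hm₀ μ) {s : Set Ω} (hs : MeasurableSet[m₁] s) :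
    μ⟦s | m₀ ⊔ m₂⟧ =ᵐ[μ] μ⟦s | m₀⟧ := by
  have hsM : MeasurableSet s := hm₁ s hs
  have hind : ∀ {u : Set Ω}, MeasurableSet u → Integrable (u.indicator fun _ => (1 : ℝ)) μ :=
    fun hu => (integrable_const 1).indicator hu
  have hmeas : StronglyMeasurable[m₀ ⊔ m₂] (μ⟦s | m₀⟧) :=
    stronglyMeasurable_condExp.mono le_sup_left
  refine (ae_eq_condExp_of_forall_setIntegral_eq (sup_le hm₀ hm₂) (hind hsM)
    (fun _ _ _ => integrable_condExp.integrableOn) (fun A hA _ => ?_)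
    hmeas.aestronglyMeasurable).symm
  refine setIntegral_eq_of_forall_inter hm₀ hm₂ integrable_condExp (hind hsM)
    (fun c b hc hb => ?_) hA
  have hbM : MeasurableSet b := hm₂ b hb
  have hsb : μ[b.indicator (μ⟦s | m₀⟧) | m₀] =ᵐ[μ] μ⟦s ∩ b | m₀⟧ :=
    (condExp_indicator_mul_ae_eq stronglyMeasurable_condExp integrable_condExp hbM).trans
      ((condIndep_iff m₀ m₁ m₂ hm₀ hm₁ hm₂ μ).1 h s b hs hb).symm
  calc ∫ x in c ∩ b, (μ⟦s | m₀⟧) x ∂μ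
      = ∫ x in c, μ[b.indicator (μ⟦s | m₀⟧) | m₀] x ∂μ := by
        rw [setIntegral_condExp hm₀ (integrable_condExp.indicator hbM) hc,
          setIntegral_indicator hbM]
    _ = ∫ x in c, (μ⟦s ∩ b | m₀⟧) x ∂μ :=
        setIntegral_congr_ae (hm₀ c hc) (hsb.mono fun _ h _ => h)
    _ = ∫ x in c ∩ b, (s.indicator fun _ => (1 : ℝ)) x ∂μ := by
        rw [setIntegral_condExp hm₀ (hind (hsM.inter hbM)) hc, ← setIntegral_indicator hbM,
          Set.indicator_indicator, Set.inter_comm]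

theorem condIndep_of_condExp_sup_ae_eq (hm₀ : m₀ ≤ mΩ) (hm₁ : m₁ ≤ mΩ) (hm₂ : m₂ ≤ mΩ)
    (h : ∀ s, MeasurableSet[m₁] s → μ⟦s | m₀ ⊔ m₂⟧ =ᵐ[μ] μ⟦s | m₀⟧) :
    CondIndep m₀ m₁ m₂ hm₀ μ := by
  refine (condIndep_iff m₀ m₁ m₂ hm₀ hm₁ hm₂ μ).2 fun s t hs ht => ?_
  calc μ⟦s ∩ t | m₀⟧
      =ᵐ[μ] μ[μ⟦s ∩ t | m₀ ⊔ m₂⟧ | m₀] :=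
        (condExp_condExp_of_le le_sup_left (sup_le hm₀ hm₂)).symm
    _ =ᵐ[μ] μ[t.indicator (μ⟦s | m₀⟧) | m₀] := by
        refine condExp_congr_ae ?_
        rw [Set.inter_comm, ← Set.indicator_indicator]
        exact (condExp_indicator ((integrable_const 1).indicator (hm₁ s hs))
          (le_sup_right (a := m₀) t ht)).trans (h s hs).indicator
    _ =ᵐ[μ] μ⟦s | m₀⟧ * μ⟦t | m₀⟧ :=
        condExp_indicator_mul_ae_eq stronglyMeasurable_condExp integrable_condExp (hm₂ t ht)

theorem condIndep_iff_condExp_sup_ae_eq (hm₀ : m₀ ≤ mΩ) (hm₁ : m₁ ≤ mΩ) (hm₂ : m₂ ≤ mΩ) :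
    CondIndep m₀ m₁ m₂ hm₀ μ ↔ ∀ s, MeasurableSet[m₁] s → μ⟦s | m₀ ⊔ m₂⟧ =ᵐ[μ] μ⟦s | m₀⟧ :=
  ⟨fun h _ hs => condExp_sup_ae_eq_of_condIndep hm₀ hm₁ hm₂ h hs,
    condIndep_of_condExp_sup_ae_eq hm₀ hm₁ hm₂⟩

theorem CondIndep.weak_union (hm₀ : m₀ ≤ mΩ) (hm₁ : m₁ ≤ mΩ) (hm₂ : m₂ ≤ mΩ) (hm₃ : m₃ ≤ mΩ)
    (h : CondIndep m₀ m₁ (m₂ ⊔ m₃) hm₀ μ) : CondIndep (m₀ ⊔ m₃) m₁ m₂ (sup_le hm₀ hm₃) μ := by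
  have h₃ := (condIndep_iff_condExp_sup_ae_eq hm₀ hm₁ hm₃).1
    (condIndep_of_condIndep_of_le_right h le_sup_right)
  rw [condIndep_iff_condExp_sup_ae_eq hm₀ hm₁ (sup_le hm₂ hm₃)] at h
  refine condIndep_of_condExp_sup_ae_eq _ hm₁ hm₂ fun s hs => ?_
  rw [sup_assoc, sup_comm m₃]
  exact (h s hs).trans (h₃ s hs).symm

theorem CondIndep.contraction (hm₀ : m₀ ≤ mΩ) (hm₁ : m₁ ≤ mΩ) (hm₂ : m₂ ≤ mΩ) (hm₃ : m₃ ≤ mΩ)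
    (h₃ : CondIndep m₀ m₁ m₃ hm₀ μ) (h₂ : CondIndep (m₀ ⊔ m₃) m₁ m₂ (sup_le hm₀ hm₃) μ) :
    CondIndep m₀ m₁ (m₂ ⊔ m₃) hm₀ μ := by
  rw [condIndep_iff_condExp_sup_ae_eq hm₀ hm₁ hm₃] at h₃
  rw [condIndep_iff_condExp_sup_ae_eq _ hm₁ hm₂] at h₂
  refine condIndep_of_condExp_sup_ae_eq hm₀ hm₁ (sup_le hm₂ hm₃) fun s hs => ?_
  rw [sup_comm m₂, ← sup_assoc]
  exact (h₂ s hs).trans (h₃ s hs)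

end CondIndepSup

section Map

variable {Ω Λ : Type*} {m m₀ m₁ m₂ : MeasurableSpace Λ} [mΩ : MeasurableSpace Ω]
  [mΛ : MeasurableSpace Λ] {μ : Measure Ω} [IsFiniteMeasure μ] {T : Ω → Λ}

theorem condExp_map_comp_ae_eq (hm : m ≤ mΛ) (hT : Measurable T) {g : Λ → ℝ}
    (hg : Integrable g (μ.map T)) :
    (fun ω => (μ.map T)[g | m] (T ω)) =ᵐ[μ] μ[g ∘ T | m.comap T] := by
  have hcond : AEStronglyMeasurable ((μ.map T)[g | m]) (μ.map T) :=
    (stronglyMeasurable_condExp.mono hm).aestronglyMeasurable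
  refine ae_eq_condExp_of_forall_setIntegral_eq
    ((MeasurableSpace.comap_mono hm).trans hT.comap_le)
    ((integrable_map_measure hg.1 hT.aemeasurable).1 hg) (fun _ _ _ => ?_) ?_ ?_
  · exact ((integrable_map_measure hcond hT.aemeasurable).1 integrable_condExp).integrableOn
  · rintro _ ⟨B, hB, rfl⟩ _
    rw [← setIntegral_map (hm B hB) hcond hT.aemeasurable, setIntegral_condExp hm hg hB]
    exact setIntegral_map (hm B hB) hg.1 hT.aemeasurable
  · exact (stronglyMeasurable_condExp.comp_measurable
      (Measurable.of_comap_le le_rfl)).aestronglyMeasurable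

theorem condExp_preimage_ae_eq (hm : m ≤ mΛ) (hT : Measurable T) {u : Set Λ}
    (hu : MeasurableSet u) :
    μ⟦T ⁻¹' u | m.comap T⟧ =ᵐ[μ] fun ω => ((μ.map T)⟦u | m⟧) (T ω) :=
  (condExp_map_comp_ae_eq hm hT ((integrable_const 1).indicator hu)).symm

variable [StandardBorelSpace Ω] [StandardBorelSpace Λ]

theorem condIndep_comap_iff_map (hm₀ : m₀ ≤ mΛ) (hm₁ : m₁ ≤ mΛ) (hm₂ : m₂ ≤ mΛ)
    (hT : Measurable T) :
    CondIndep (m₀.comap T) (m₁.comap T) (m₂.comap T)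
        ((MeasurableSpace.comap_mono hm₀).trans hT.comap_le) μ ↔
      CondIndep m₀ m₁ m₂ hm₀ (μ.map T) := by
  have hcomap : ∀ {m'}, m' ≤ mΛ → m'.comap T ≤ mΩ :=
    fun hm' => (MeasurableSpace.comap_mono hm').trans hT.comap_le
  have hcexp {u : Set Λ} (hu : MeasurableSet u) := condExp_preimage_ae_eq (μ := μ) hm₀ hT hu
  have key {s t : Set Λ} (hs : MeasurableSet s) (ht : MeasurableSet t) :
      μ⟦T ⁻¹' s ∩ T ⁻¹' t | m₀.comap T⟧
          =ᵐ[μ] μ⟦T ⁻¹' s | m₀.comap T⟧ * μ⟦T ⁻¹' t | m₀.comap T⟧ ↔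
        (μ.map T)⟦s ∩ t | m₀⟧ =ᵐ[μ.map T] (μ.map T)⟦s | m₀⟧ * (μ.map T)⟦t | m₀⟧ := by
    have hmeas : ∀ {u}, StronglyMeasurable ((μ.map T)⟦u | m₀⟧) :=
      stronglyMeasurable_condExp.mono hm₀
    rw [← Set.preimage_inter]
    refine Iff.trans ?_
      (ae_map_iff hT.aemeasurable (hmeas.measurableSet_eq_fun (hmeas.mul hmeas))).symm
    exact ⟨fun h => (hcexp (hs.inter ht)).symm.trans (h.trans ((hcexp hs).mul (hcexp ht))),
      fun h => (hcexp (hs.inter ht)).trans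
        (Filter.EventuallyEq.trans h ((hcexp hs).mul (hcexp ht)).symm)⟩
  rw [condIndep_iff _ _ _ _ (hcomap hm₁) (hcomap hm₂), condIndep_iff _ _ _ _ hm₁ hm₂]
  constructor
  · intro h s t hs ht
    exact (key (hm₁ s hs) (hm₂ t ht)).1 (h _ _ ⟨s, hs, rfl⟩ ⟨t, ht, rfl⟩)
  · rintro h _ _ ⟨s, hs, rfl⟩ ⟨t, ht, rfl⟩
    exact (key (hm₁ s hs) (hm₂ t ht)).2 (h s t hs ht)

end Map

section Coordinates

variable {V : Type*} {E : V → Type*} [∀ v, MeasurableSpace (E v)]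

abbrev coordSigmaAlgebra (S : Set V) : MeasurableSpace (∀ v, E v) :=
  ⨆ v ∈ S, MeasurableSpace.comap (Function.eval v) inferInstance

theorem coordSigmaAlgebra_le (S : Set V) :
    coordSigmaAlgebra (E := E) S ≤ MeasurableSpace.pi :=
  iSup₂_le fun v _ => (measurable_pi_apply v).comap_le

theorem comap_coordSigmaAlgebra_le {Ω : Type*} [mΩ : MeasurableSpace Ω] {Y : Ω → ∀ v, E v}
    (hY : Measurable Y) (S : Set V) : (coordSigmaAlgebra S).comap Y ≤ mΩ :=
  (MeasurableSpace.comap_mono (coordSigmaAlgebra_le S)).trans hY.comap_le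

theorem coordSigmaAlgebra_union (S T : Set V) :
    coordSigmaAlgebra (E := E) (S ∪ T) = coordSigmaAlgebra S ⊔ coordSigmaAlgebra T :=
  iSup_union

theorem comap_restrict_eq_coordSigmaAlgebra (S : Set V) :
    MeasurableSpace.comap (fun (x : ∀ v, E v) (v : S) => x v) inferInstance =
      coordSigmaAlgebra (E := E) S := by
  simp only [MeasurableSpace.pi, MeasurableSpace.comap_iSup, MeasurableSpace.comap_comp]
  exact iSup_subtype

theorem comap_comp_perm_coordSigmaAlgebra {E : Type*} [MeasurableSpace E] (σ : Equiv.Perm V)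
    (S : Set V) :
    (coordSigmaAlgebra S).comap (fun x : V → E => x ∘ σ) = coordSigmaAlgebra (σ '' S) := by
  simp only [coordSigmaAlgebra, MeasurableSpace.comap_iSup, MeasurableSpace.comap_comp]
  exact (iSup_image (g := fun v => MeasurableSpace.comap (Function.eval v) inferInstance)).symm

end Coordinates

section CI

variable {V Ω : Type*} [mΩ : MeasurableSpace Ω] [StandardBorelSpace Ω] {μ : Measure Ω}
  [IsFiniteMeasure μ]

theorem ci_iff_condIndep {E : V → Type*} [∀ v, MeasurableSpace (E v)] {X : ∀ v, Ω → E v}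
    (hX : ∀ v, Measurable (X v)) (A B C : Set V) :
    CI μ X hX A B C ↔
      CondIndep ((coordSigmaAlgebra C).comap fun ω v => X v ω)
        ((coordSigmaAlgebra A).comap fun ω v => X v ω)
        ((coordSigmaAlgebra B).comap fun ω v => X v ω)
        (comap_coordSigmaAlgebra_le (measurable_pi_lambda _ hX) C) μ := by
  rw [CI, condIndepFun_iff_condIndep]
  simp only [← comap_restrict_eq_coordSigmaAlgebra, MeasurableSpace.comap_comp]
  rfl

section Graphoid

variable {E : V → Type*} [∀ v, MeasurableSpace (E v)] {X : ∀ v, Ω → E v}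
  {hX : ∀ v, Measurable (X v)} {A B C D : Set V}

theorem CI.weak_union (h : CI μ X hX A (B ∪ D) C) : CI μ X hX A B (C ∪ D) := by
  have hle := comap_coordSigmaAlgebra_le (measurable_pi_lambda _ hX)
  rw [ci_iff_condIndep] at h ⊢
  simp only [coordSigmaAlgebra_union, MeasurableSpace.comap_sup] at h ⊢
  exact CondIndep.weak_union (hle C) (hle A) (hle B) (hle D) h

theorem CI.contraction (hD : CI μ X hX A D C) (hB : CI μ X hX A B (C ∪ D)) :
    CI μ X hX A (B ∪ D) C := by
  have hle := comap_coordSigmaAlgebra_le (measurable_pi_lambda _ hX)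
  rw [ci_iff_condIndep] at hD hB ⊢
  simp only [coordSigmaAlgebra_union, MeasurableSpace.comap_sup] at hB ⊢
  exact CondIndep.contraction (hle C) (hle A) (hle B) (hle D) hD hB

end Graphoid

variable [Countable V] {E : Type*} [MeasurableSpace E] [StandardBorelSpace E]

theorem CI.image_perm_iff {X : V → Ω → E} (hX : ∀ v, Measurable (X v)) (σ : Equiv.Perm V)
    (hσ : μ.map (fun ω v => X (σ v) ω) = μ.map (fun ω v => X v ω)) (A B C : Set V) :
    CI μ X hX (σ '' A) (σ '' B) (σ '' C) ↔ CI μ X hX A B C := by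
  have hY : Measurable fun ω v => X v ω := measurable_pi_lambda _ hX
  have hperm : Measurable fun x : V → E => x ∘ σ :=
    measurable_pi_lambda _ fun v => measurable_pi_apply (σ v)
  have hlaw : (μ.map fun ω v => X v ω).map (· ∘ σ) = μ.map fun ω v => X v ω := by
    rw [Measure.map_map hperm hY]
    exact hσ
  have hle := coordSigmaAlgebra_le (E := fun _ : V => E)
  rw [ci_iff_condIndep, ci_iff_condIndep, condIndep_comap_iff_map (hle _) (hle _) (hle _) hY,
    condIndep_comap_iff_map (hle _) (hle _) (hle _) hY]
  simp only [← comap_comp_perm_coordSigmaAlgebra]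
  exact (condIndep_comap_iff_map (hle _) (hle _) (hle _) hperm).trans (by simp only [hlaw])

theorem CI.perm_singleton_right {X : V → Ω → E} {hX : ∀ v, Measurable (X v)}
    {σ : Equiv.Perm V} (hσ : μ.map (fun ω v => X (σ v) ω) = μ.map (fun ω v => X v ω))
    {A C : Set V} (hA : ∀ v ∈ A, σ v = v) (hC : ∀ v ∈ C, σ v = v) {j : V}
    (h : CI μ X hX A {j} C) : CI μ X hX A {σ j} C := by
  have := (CI.image_perm_iff hX σ hσ A {j} C).2 h
  rwa [Set.image_congr hA, Set.image_congr hC, Set.image_id', Set.image_id',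
    Set.image_singleton] at this

end CI

variable {V : Type*} [Fintype V] {Ω : Type*} [MeasurableSpace Ω] [StandardBorelSpace Ω]
  [Nonempty Ω] {E : Type*} [MeasurableSpace E] [StandardBorelSpace E] [Nonempty E]
  (μ : MeasureTheory.Measure Ω) [MeasureTheory.IsProbabilityMeasure μ]
  (X : V → Ω → E) (hX : ∀ i, Measurable (X i))

/-- If the joint distribution of `(X i)_{i ∈ V}` is exchangeable, then `P` satisfies the
composition property iff `P` satisfies upward stability. -/
theorem stmt_6
    (hexch : ∀ σ : Equiv.Perm V,
      μ.map (fun ω => fun i : V => X (σ i) ω) = μ.map (fun ω => fun i : V => X i ω)) :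
    (∀ i j k : V, i ≠ j → i ≠ k → j ≠ k → ∀ C : Set V, C ⊆ ({i, j, k} : Set V)ᶜ →
        CI μ X hX {i} {j} C → CI μ X hX {i} {k} C → CI μ X hX {i} {j, k} C) ↔
      (∀ i j k : V, i ≠ j → i ≠ k → j ≠ k → ∀ C : Set V, C ⊆ ({i, j, k} : Set V)ᶜ →
        CI μ X hX {i} {j} C → CI μ X hX {i} {j} (C ∪ {k})) := by
  classical
  constructor
  · intro hcomp i j k hij hik hjk C hC hijC
    have hfix : ∀ v ∈ C, Equiv.swap j k v = v := fun v hv =>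
      Equiv.swap_apply_of_ne_of_ne (fun h => hC hv (by simp [h])) (fun h => hC hv (by simp [h]))
    have hikC : CI μ X hX {i} {k} C := by
      simpa using hijC.perm_singleton_right (hexch (Equiv.swap j k))
        (by simpa using Equiv.swap_apply_of_ne_of_ne hij hik) hfix
    exact CI.weak_union (by rw [← Set.insert_eq]; exact hcomp i j k hij hik hjk C hC hijC hikC)
  · intro hus i j k hij hik hjk C hC hijC hikC
    rw [Set.insert_eq]
    exact hikC.contraction (hus i j k hij hik hjk C hC hijC)
end

section
/- If P is V-stable, then every v-configuration i∼k∼j in sk(P) is assigned by the V-OUS and collider-stable orientation rule with respect to P (to be a collider or to be a non-collider), and moreover it is assigned to be a collider if and only if there exists C ⊆ V∖{i,j,k} with {i} ⫫ {j} | C, and assigned to be a non-collider if and only if k ∈ C for every C ⊆ V∖{i,j} with {i} ⫫ {j} | C. -/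
open MeasureTheory ProbabilityTheory

variable {V : Type*} [Fintype V] {Ω : Type*} [MeasurableSpace Ω] [StandardBorelSpace Ω]
  [Nonempty Ω] {E : V → Type*} [∀ i, MeasurableSpace (E i)]
  (μ : MeasureTheory.Measure Ω) [MeasureTheory.IsProbabilityMeasure μ]
  (X : ∀ i, Ω → E i) (hX : ∀ i, Measurable (X i))

/-- If `P` is V-stable, then every v-configuration of `sk(P)` is assigned by the
orientation rule, it is assigned to be a collider iff some `C ⊆ V \ {i,j,k}` gives
`{i} ⫫ {j} | C`, and assigned to be a non-collider iff `k ∈ C` whenever `{i} ⫫ {j} | C`. -/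
theorem stmt_7 (hV : VStable μ X hX) (i k j : V)
    (hv : VConfigRel (SkP μ X hX) i k j) :
    (AssignedCollider μ X hX i k j ∨ AssignedNonCollider μ X hX i k j) ∧
    (AssignedCollider μ X hX i k j ↔
      ∃ C : Set V, C ⊆ ({i, j, k} : Set V)ᶜ ∧ CI μ X hX {i} {j} C) ∧
    (AssignedNonCollider μ X hX i k j ↔
      ∀ C : Set V, C ⊆ ({i, j} : Set V)ᶜ → CI μ X hX {i} {j} C → k ∈ C) := by
  have hiff2 : AssignedCollider μ X hX i k j ↔
      ∃ C : Set V, C ⊆ ({i, j, k} : Set V)ᶜ ∧ CI μ X hX {i} {j} C := by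
    constructor
    · rintro ⟨_, C, hC, hCI, _⟩; exact ⟨C, hC, hCI⟩
    · rintro ⟨C, hC, hCI⟩
      refine ⟨hv, C, hC, hCI, fun h => hV i k j hv C hC ⟨hCI, h⟩⟩
  have hiff3 : AssignedNonCollider μ X hX i k j ↔
      ∀ C : Set V, C ⊆ ({i, j} : Set V)ᶜ → CI μ X hX {i} {j} C → k ∈ C :=
    ⟨fun h => h.2, fun h => ⟨hv, h⟩⟩
  refine ⟨?_, hiff2, hiff3⟩
  by_cases hex : ∃ C : Set V, C ⊆ ({i, j, k} : Set V)ᶜ ∧ CI μ X hX {i} {j} C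
  · exact Or.inl (hiff2.mpr hex)
  · refine Or.inr ⟨hv, fun C hC hCI => ?_⟩
    by_contra hk
    refine hex ⟨C, fun x hx => ?_, hCI⟩
    have := hC hx
    simp only [Set.mem_compl_iff, Set.mem_insert_iff, Set.mem_singleton_iff] at this ⊢
    push_neg at this ⊢
    exact ⟨this.1, this.2, fun hxk => hk (hxk ▸ hx)⟩
end

section
/- If P is Markovian to a DAG G, then P is pairwise Markovian to G; that is, for every pair of distinct nodes i, j that are not adjacent in G, {i} ⫫ {j} | an_G({i,j}). -/
open MeasureTheory ProbabilityTheory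

variable {V : Type*} [Fintype V] {Ω : Type*} [MeasurableSpace Ω] [StandardBorelSpace Ω]
  [Nonempty Ω] {E : V → Type*} [∀ i, MeasurableSpace (E i)]
  (μ : MeasureTheory.Measure Ω) [MeasureTheory.IsProbabilityMeasure μ]
  (X : ∀ i, Ω → E i) (hX : ∀ i, Measurable (X i))

theorem aux_dsep {V : Type*} (G : DAG V) (i j : V) (hij : i ≠ j)
    (hnadj : ¬ G.Adj i j) (π : DAG.Path G i j) :
    π.Blocked (G.ancestors {i, j}) := by
  by_contra hnb
  set C := G.ancestors {i, j} with hC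
  have hf0 : ∀ h, π.f ⟨0, h⟩ = i := by
    intro h
    have h0 : (⟨0, h⟩ : Fin (π.n + 1)) = 0 := Fin.ext (by simp)
    rw [h0]; exact π.first
  have hfn : ∀ h, π.f ⟨π.n, h⟩ = j := by
    intro h; exact π.last
  have hne_i : ∀ (t : ℕ) (ht : t < π.n + 1), t ≠ 0 → π.f ⟨t, ht⟩ ≠ i := by
    intro t ht ht0 h
    have := π.inj (h.trans (hf0 (by omega)).symm)
    exact ht0 (congrArg Fin.val this)
  have hne_j : ∀ (t : ℕ) (ht : t < π.n + 1), t ≠ π.n → π.f ⟨t, ht⟩ ≠ j := by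
    intro t ht htn h
    have := π.inj (h.trans (hfn (by omega)).symm)
    exact htn (congrArg Fin.val this)
  have hadj : ∀ (t : ℕ) (ht : t < π.n),
      G.Adj (π.f ⟨t, by omega⟩) (π.f ⟨t + 1, by omega⟩) := fun t ht => π.adj ⟨t, ht⟩
  have hnoncol : ∀ (t : ℕ) (h1 : 0 < t) (h2 : t < π.n),
      ¬ π.ColliderAt t h1 h2 → π.f ⟨t, by omega⟩ ∉ C := by
    intro t h1 h2 hnc hmem
    exact hnb ⟨t, h1, h2, Or.inl ⟨hnc, hmem⟩⟩
  have hcol_mem : ∀ (t : ℕ) (h1 : 0 < t) (h2 : t < π.n),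
      π.ColliderAt t h1 h2 → π.f ⟨t, by omega⟩ ∈ C := by
    intro t h1 h2 hc
    by_cases hmem : π.f ⟨t, by omega⟩ ∈ C ∪ G.ancestors C
    · rcases hmem with hmem | hmem
      · exact hmem
      · -- ancestor of an ancestor set: must be i or j, impossible
        obtain ⟨hkC, c, hcC, hkc⟩ := hmem
        obtain ⟨hc2, m, hm, hcm⟩ := hcC
        exfalso
        have htr := hkc.trans hcm
        have hmemIJ : π.f ⟨t, by omega⟩ ∉ ({i, j} : Set V) := by
          intro h
          rcases h with h | h
          · exact hne_i t (by omega) (by omega) h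
          · exact hne_j t (by omega) (by omega) h
        exact hkC ⟨hmemIJ, m, hm, htr⟩
    · exact absurd (hnb ⟨t, h1, h2, Or.inr ⟨hc, hmem⟩⟩) (fun h => h)
  -- forward escape lemma
  have P : ∀ (d t : ℕ) (ht : t < π.n), π.n - t ≤ d →
      G.Edge (π.f ⟨t, by omega⟩) (π.f ⟨t + 1, by omega⟩) →
      ∃ m, (m = i ∨ m = j) ∧ Relation.TransGen G.Edge (π.f ⟨t, by omega⟩) m := by
    intro d
    induction d with
    | zero => intro t ht hle; omega
    | succ d ih =>
      intro t ht hle he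
      by_cases hl : t + 1 = π.n
      · refine ⟨j, Or.inr rfl, Relation.TransGen.single ?_⟩
        have hcast : (⟨t + 1, by omega⟩ : Fin (π.n + 1)) = ⟨π.n, by omega⟩ :=
          Fin.mk_eq_mk.mpr hl
        rw [hcast] at he
        rw [hfn] at he
        exact he
      · have ht1 : t + 1 < π.n := by omega
        by_cases hcol : G.Edge (π.f ⟨t + 2, by omega⟩) (π.f ⟨t + 1, by omega⟩)
        · have hc : π.ColliderAt (t + 1) (by omega) ht1 := by
            constructor
            · have h1 : (⟨t + 1 - 1, by omega⟩ : Fin (π.n + 1)) = ⟨t, by omega⟩ := Fin.mk_eq_mk.mpr (by omega)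
              rw [h1]; exact he
            · have h1 : (⟨t + 1 + 1, by omega⟩ : Fin (π.n + 1)) = ⟨t + 2, by omega⟩ := Fin.mk_eq_mk.mpr (by omega)
              rw [h1]; exact hcol
          have hmem := hcol_mem (t + 1) (by omega) ht1 hc
          obtain ⟨-, m, hm, htr⟩ := hmem
          refine ⟨m, ?_, Relation.TransGen.head he htr⟩
          rcases hm with h | h
          · exact Or.inl h
          · exact Or.inr h
        · rcases hadj (t + 1) ht1 with he2 | he2
          · obtain ⟨m, hm, htr⟩ := ih (t + 1) ht1 (by omega) he2
            exact ⟨m, hm, Relation.TransGen.head he htr⟩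
          · have h1 : (⟨t + 1 + 1, by omega⟩ : Fin (π.n + 1)) = ⟨t + 2, by omega⟩ := Fin.mk_eq_mk.mpr (by omega)
            rw [h1] at he2
            exact absurd he2 hcol
  -- backward escape lemma
  have Q : ∀ (t : ℕ) (ht : t < π.n),
      G.Edge (π.f ⟨t + 1, by omega⟩) (π.f ⟨t, by omega⟩) →
      ∃ m, (m = i ∨ m = j) ∧ Relation.TransGen G.Edge (π.f ⟨t + 1, by omega⟩) m := by
    intro t
    induction t with
    | zero =>
      intro ht he
      refine ⟨i, Or.inl rfl, Relation.TransGen.single ?_⟩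
      rwa [hf0] at he
    | succ t ih =>
      intro ht he
      by_cases hcol : G.Edge (π.f ⟨t, by omega⟩) (π.f ⟨t + 1, by omega⟩)
      · have hc : π.ColliderAt (t + 1) (by omega) (by omega) := by
          constructor
          · have h1 : (⟨t + 1 - 1, by omega⟩ : Fin (π.n + 1)) = ⟨t, by omega⟩ := Fin.mk_eq_mk.mpr (by omega)
            rw [h1]; exact hcol
          · have h1 : (⟨t + 1 + 1, by omega⟩ : Fin (π.n + 1)) = ⟨t + 2, by omega⟩ := Fin.mk_eq_mk.mpr (by omega)
            rw [h1]
            have h2 : (⟨t + 1 + 1, by omega⟩ : Fin (π.n + 1)) = ⟨t + 2, by omega⟩ := Fin.mk_eq_mk.mpr (by omega)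
            rw [h2] at he
            exact he
        have hmem := hcol_mem (t + 1) (by omega) (by omega) hc
        obtain ⟨-, m, hm, htr⟩ := hmem
        refine ⟨m, ?_, Relation.TransGen.head he htr⟩
        rcases hm with h | h
        · exact Or.inl h
        · exact Or.inr h
      · rcases hadj t (by omega) with he2 | he2
        · exact absurd he2 hcol
        · obtain ⟨m, hm, htr⟩ := ih (by omega) he2
          exact ⟨m, hm, Relation.TransGen.head he htr⟩
  -- every intermediate node is a collider
  have hIC : ∀ (t : ℕ) (h1 : 0 < t) (h2 : t < π.n), π.ColliderAt t h1 h2 := by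
    intro t h1 h2
    by_contra hnc
    have hnotC := hnoncol t h1 h2 hnc
    -- the two path edges incident to position t
    have hadjL := hadj (t - 1) (by omega)
    have hLcast : (⟨t - 1 + 1, by omega⟩ : Fin (π.n + 1)) = ⟨t, by omega⟩ := Fin.mk_eq_mk.mpr (by omega)
    rw [hLcast] at hadjL
    have hadjR := hadj t h2
    have hesc : ∃ m, (m = i ∨ m = j) ∧
        Relation.TransGen G.Edge (π.f ⟨t, by omega⟩) m := by
      rcases hadjR with heR | heR
      · exact P π.n t h2 (by omega) heR
      · rcases hadjL with heL | heL
        · exact absurd ⟨heL, heR⟩ hnc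
        · have := Q (t - 1) (by omega)
          rw [hLcast] at this
          exact this heL
    obtain ⟨m, hm, htr⟩ := hesc
    apply hnotC
    refine ⟨?_, m, ?_, htr⟩
    · intro hmem
      rcases hmem with h | h
      · exact hne_i t (by omega) (by omega) h
      · exact hne_j t (by omega) (by omega) h
    · rcases hm with rfl | rfl
      · exact Or.inl rfl
      · exact Or.inr rfl
  -- now derive a contradiction
  have hn1 : 1 ≤ π.n := π.npos
  rcases Nat.lt_or_ge π.n 2 with hn | hn
  · -- n = 1: i and j adjacent
    have hn' : π.n = 1 := by omega
    have := hadj 0 (by omega)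
    rw [hf0] at this
    have h1 : (⟨0 + 1, by omega⟩ : Fin (π.n + 1)) = ⟨π.n, by omega⟩ := Fin.mk_eq_mk.mpr (by omega)
    rw [h1, hfn] at this
    exact hnadj this
  · rcases Nat.lt_or_ge π.n 3 with hn3 | hn3
    · -- n = 2 : single intermediate collider, in C, gives a cycle
      have hn' : π.n = 2 := by omega
      have hc := hIC 1 (by omega) (by omega)
      obtain ⟨e01, e21⟩ := hc
      have hmem := hcol_mem 1 (by omega) (by omega) ⟨e01, e21⟩
      obtain ⟨-, m, hm, htr⟩ := hmem
      have hcast0 : (⟨1 - 1, by omega⟩ : Fin (π.n + 1)) = ⟨0, by omega⟩ := Fin.mk_eq_mk.mpr (by omega)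
      rw [hcast0, hf0] at e01
      have hcast2 : (⟨1 + 1, by omega⟩ : Fin (π.n + 1)) = ⟨π.n, by omega⟩ := Fin.mk_eq_mk.mpr (by omega)
      rw [hcast2, hfn] at e21
      rcases hm with rfl | rfl
      · exact G.acyclic m (Relation.TransGen.head e01 htr)
      · exact G.acyclic m (Relation.TransGen.head e21 htr)
    · -- n ≥ 3 : two consecutive colliders give a 2-cycle
      have hc1 := hIC 1 (by omega) (by omega)
      have hc2 := hIC 2 (by omega) (by omega)
      have e21 := hc1.2
      have e12 := hc2.1
      have hcastA : (⟨1 + 1, by omega⟩ : Fin (π.n + 1)) = ⟨2, by omega⟩ := Fin.mk_eq_mk.mpr (by omega)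
      rw [hcastA] at e21
      have hcastB : (⟨2 - 1, by omega⟩ : Fin (π.n + 1)) = ⟨1, by omega⟩ := Fin.mk_eq_mk.mpr (by omega)
      rw [hcastB] at e12
      exact G.acyclic _ (Relation.TransGen.head e12 (Relation.TransGen.single e21))

/-- If `P` is Markovian to a DAG `G`, then `P` is pairwise Markovian to `G`:
for all distinct non-adjacent `i, j`, `{i} ⫫ {j} | an_G({i,j})`. -/
theorem stmt_9 (G : DAG V) (hM : MarkovTo μ X hX G) (i j : V) (hij : i ≠ j)
    (hnadj : ¬ G.Adj i j) :
    CI μ X hX {i} {j} (G.ancestors {i, j}) := by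
  apply hM
  · exact Set.disjoint_singleton.mpr hij
  · exact Set.disjoint_singleton_left.mpr (fun h => h.1 (Or.inl rfl))
  · exact Set.disjoint_singleton_left.mpr (fun h => h.1 (Or.inr rfl))
  · intro a ha b hb π
    rcases ha with rfl
    rcases hb with rfl
    exact aux_dsep G a b hij hnadj π
end
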